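/- arXiv:2306.16365 — 8 statements merged into one kernel-verified Lean document; each statement's English description precedes it below -/
import Mathlib

section
/- For all integers t ≥ 2 and k ≥ 2, the number ‖A_t‖₁ of 1-entries of the matrix A_t satisfies (1 − 1/(k−1)) · n · k^t ≤ ‖A_t‖₁ ≤ n · k^t, where n = k^{t²k} is the dimension of A_t. -/
/-- `⟨j_1,…,j_m⟩ = 1 + Σ_{i=1}^m (j_i−1)·k^{m−i}`, the injection `[k]^m → [k^m]`. -/
def ang (k : ℕ) (l : List ℕ) : ℕ := l.foldl (fun acc j => acc * k + (j - 1)) 0 + 1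

/-- The vector `v[j_1,…,j_t]`, given by a function `js : ℕ → ℕ` with `js r` being `j_{r+1}`.
Coordinates are flattened: flat coordinate `i` is coordinate `i % k` (0-indexed) of
block `i / k` (0-indexed).  It is 0 everywhere except at coordinate `j_r` (1-indexed) of
block `r` (1-indexed), where it equals `⟨j_1,…,j_{r−1}⟩`. -/
def vVec (k : ℕ) (js : ℕ → ℕ) (i : ℕ) : ℤ :=
  if i % k + 1 = js (i / k) then (ang k ((List.range (i / k)).map js) : ℤ) else 0

/-- Membership in `I = {1,…,k^t}^{tk}`. -/
def memI (t k : ℕ) (a : Fin (t * k) → ℕ) : Prop := ∀ i, 1 ≤ a i ∧ a i ≤ k ^ t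

/-- Lexicographic (strict) order on tuples. -/
def lexLt {N : ℕ} (a b : Fin N → ℕ) : Prop :=
  ∃ i : Fin N, (∀ j, j < i → a j = b j) ∧ a i < b i

/-- `js` codes an element `(j_1,…,j_t) ∈ [k]^t`. -/
def validJs (t k : ℕ) (js : ℕ → ℕ) : Prop := ∀ r, r < t → 1 ≤ js r ∧ js r ≤ k

/-- The entry `A_t(a,b)` is 1 iff `b − a ∈ S`, i.e. `b − a = v[j_1,…,j_t]` for some
`(j_1,…,j_t) ∈ [k]^t`. -/
def AtOne (t k : ℕ) (a b : Fin (t * k) → ℕ) : Prop :=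
  ∃ js : ℕ → ℕ, validJs t k js ∧
    ∀ i : Fin (t * k), (b i : ℤ) - (a i : ℤ) = vVec k js i.val

/-- `typeOf a b` is the (1-indexed) first block where `a` and `b` differ. -/
noncomputable def typeOf (t k : ℕ) (a b : Fin (t * k) → ℕ) : ℕ :=
  sInf {r | ∃ i : Fin (t * k), i.val / k + 1 = r ∧ a i ≠ b i}

/-!
Writing `K = k^t`, `N = tk` and `n = K^N`, a pair `(a, b)` is counted iff `b = a + d` with
`d ∈ S`, so the count equals the number of `(a, d) ∈ I × S` with `a + d ∈ I`. The vector
`v[j]` has in block `r` a single nonzero entry `⟨j_1, …, j_{r-1}⟩ ≥ 1`, at position `j_r`, so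
`j ↦ v[j]` is injective and `|S| = k^t`; this gives the upper bound `n k^t`.
A translate `a + d` leaves `I` only if `K < a_i + d_i` for some `i`, which happens for at most
`d_i K^(N-1)` tuples `a`. The entries of `v[j]` sum to `Σ_r ⟨j_1, …, j_{r-1}⟩ ≤ Σ_{r<t} k^r`,
which is `(k^t - 1)/(k - 1)`, so at most `n k^t / (k - 1)` pairs `(a, d)` are lost.
-/

open Finset

def grid (ι : Type*) [Fintype ι] [DecidableEq ι] (K : ℕ) : Finset (ι → ℕ) :=
  Fintype.piFinset fun _ => Icc 1 K

section Grid

variable {ι : Type*} [Fintype ι] [DecidableEq ι]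

lemma card_grid (K : ℕ) : #(grid ι K) = K ^ Fintype.card ι := by
  simp [grid]

lemma card_filter_grid_lt_add_mul_le (K c : ℕ) (i : ι) :
    #{a ∈ grid ι K | K < a i + c} * K ≤ c * K ^ Fintype.card ι := by
  set T := {x ∈ Icc 1 K | K < x + c}
  have hT : #T ≤ c := by
    calc #T ≤ #(Icc (K + 1 - c) K) := card_le_card fun x hx => by
            simp only [T, mem_filter, mem_Icc] at hx ⊢; omega
      _ ≤ c := by simp; omega
  have hcard : #{a ∈ grid ι K | K < a i + c} = #T * K ^ (Fintype.card ι - 1) := by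
    rw [card_eq_sum_card_fiberwise (f := fun a => a i) (t := T) fun a ha => by
      rw [mem_coe, mem_filter, grid, Fintype.mem_piFinset] at ha
      exact mem_filter.mpr ⟨ha.1 i, ha.2⟩]
    rw [← smul_eq_mul, ← sum_const]
    refine sum_congr rfl fun x hx => ?_
    obtain ⟨hxK, hxc⟩ := mem_filter.mp hx
    have hfiber : #{a ∈ grid ι K | a i = x} = K ^ (Fintype.card ι - 1) := by
      simpa [grid] using Fintype.card_filter_piFinset_const_eq_of_mem (Icc 1 K) i hxK
    rw [filter_filter, ← hfiber]
    congr 1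
    exact filter_congr fun a _ => ⟨And.right, fun h => ⟨h ▸ hxc, h⟩⟩
  have hι : 0 < Fintype.card ι := Fintype.card_pos_iff.mpr ⟨i⟩
  calc #{a ∈ grid ι K | K < a i + c} * K = #T * K ^ Fintype.card ι := by
        rw [hcard, mul_assoc, ← pow_succ, Nat.sub_add_cancel hι]
    _ ≤ c * K ^ Fintype.card ι := Nat.mul_le_mul_right _ hT

lemma card_filter_add_notMem_grid_mul_le (K : ℕ) (d : ι → ℕ) :
    #{a ∈ grid ι K | a + d ∉ grid ι K} * K ≤ (∑ i, d i) * K ^ Fintype.card ι := by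
  have hcover : {a ∈ grid ι K | a + d ∉ grid ι K} ⊆
      univ.biUnion fun i => {a ∈ grid ι K | K < a i + d i} := by
    intro a ha
    obtain ⟨haK, had⟩ := mem_filter.mp ha
    simp only [grid, Fintype.mem_piFinset, mem_Icc, Pi.add_apply, not_forall] at haK had
    obtain ⟨i, hi⟩ := had
    have := haK i
    exact mem_biUnion.mpr ⟨i, mem_univ i, mem_filter.mpr ⟨mem_filter.mp ha |>.1, by omega⟩⟩
  calc #{a ∈ grid ι K | a + d ∉ grid ι K} * K
      ≤ (∑ i, #{a ∈ grid ι K | K < a i + d i}) * K :=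
        Nat.mul_le_mul_right _ ((card_le_card hcover).trans card_biUnion_le)
    _ ≤ (∑ i, d i) * K ^ Fintype.card ι := by
        rw [sum_mul, sum_mul]
        exact sum_le_sum fun i _ => card_filter_grid_lt_add_mul_le K (d i) i

lemma ncard_translate_pairs (K : ℕ) (D : Finset (ι → ℕ)) :
    {p : (ι → ℕ) × (ι → ℕ) | p.1 ∈ grid ι K ∧ p.2 ∈ grid ι K ∧ ∃ d ∈ D, p.2 = p.1 + d}.ncard =
      #{q ∈ grid ι K ×ˢ D | q.1 + q.2 ∈ grid ι K} := by
  have himage :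
      {p : (ι → ℕ) × (ι → ℕ) | p.1 ∈ grid ι K ∧ p.2 ∈ grid ι K ∧ ∃ d ∈ D, p.2 = p.1 + d} =
        (fun q : (ι → ℕ) × (ι → ℕ) => (q.1, q.1 + q.2)) ''
          ↑{q ∈ grid ι K ×ˢ D | q.1 + q.2 ∈ grid ι K} := by
    ext ⟨a, b⟩
    simp only [Set.mem_ofPred_eq, Set.mem_image, coe_filter, mem_product, Prod.exists,
      Prod.mk.injEq]
    constructor
    · rintro ⟨ha, hb, d, hd, rfl⟩
      exact ⟨a, d, ⟨⟨ha, hd⟩, hb⟩, rfl, rfl⟩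
    · rintro ⟨a, d, ⟨⟨ha, hd⟩, hb⟩, rfl, rfl⟩
      exact ⟨ha, hb, d, hd, rfl⟩
  rw [himage, Set.ncard_image_of_injective _ fun q q' h => ?_, Set.ncard_coe_finset]
  simp only [Prod.mk.injEq] at h
  exact Prod.ext h.1 (add_left_cancel (h.1 ▸ h.2))

lemma card_filter_add_notMem_grid_product_mul_le (K : ℕ) (D : Finset (ι → ℕ)) :
    #{q ∈ grid ι K ×ˢ D | q.1 + q.2 ∉ grid ι K} * K ≤
      (∑ d ∈ D, ∑ i, d i) * K ^ Fintype.card ι := by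
  rw [card_filter, sum_product_right, sum_mul, sum_mul]
  refine sum_le_sum fun d _ => ?_
  rw [← card_filter]
  exact card_filter_add_notMem_grid_mul_le K d

end Grid

def vNat (k : ℕ) (js : ℕ → ℕ) (i : ℕ) : ℕ :=
  if i % k + 1 = js (i / k) then ang k ((List.range (i / k)).map js) else 0

lemma vVec_eq_vNat (k : ℕ) (js : ℕ → ℕ) (i : ℕ) : vVec k js i = vNat k js i := by
  unfold vVec vNat
  split_ifs <;> simp

lemma vNat_congr {k : ℕ} {js js' : ℕ → ℕ} {i : ℕ} (h : ∀ r ≤ i / k, js r = js' r) :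
    vNat k js i = vNat k js' i := by
  unfold vNat
  rw [h (i / k) le_rfl, List.map_congr_left fun r hr => h r (List.mem_range.mp hr).le]

lemma vNat_add_mul {k q : ℕ} (hq : q < k) (js : ℕ → ℕ) (r : ℕ) :
    vNat k js (q + k * r) = if q + 1 = js r then ang k ((List.range r).map js) else 0 := by
  have hk : 0 < k := by omega
  have hdiv : (q + k * r) / k = r := by
    rw [Nat.add_mul_div_left _ _ hk, Nat.div_eq_of_lt hq, zero_add]
  have hmod : (q + k * r) % k = q := by rw [Nat.add_mul_mod_self_left, Nat.mod_eq_of_lt hq]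
  rw [vNat, hdiv, hmod]

lemma foldl_add_one_le {k : ℕ} (l : List ℕ) (hl : ∀ j ∈ l, 1 ≤ j ∧ j ≤ k) (c : ℕ) :
    l.foldl (fun acc j => acc * k + (j - 1)) c + 1 ≤ (c + 1) * k ^ l.length := by
  induction l generalizing c with
  | nil => simp
  | cons j l ih =>
    obtain ⟨hj1, hjk⟩ := hl j List.mem_cons_self
    calc List.foldl (fun acc j => acc * k + (j - 1)) (c * k + (j - 1)) l + 1
        ≤ (c * k + (j - 1) + 1) * k ^ l.length :=
          ih (fun x hx => hl x (List.mem_cons_of_mem _ hx)) _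
      _ ≤ (c + 1) * k * k ^ l.length := Nat.mul_le_mul_right _ (by rw [add_one_mul]; omega)
      _ = (c + 1) * k ^ (j :: l).length := by rw [List.length_cons, pow_succ']; ring

lemma ang_le_pow {k : ℕ} (l : List ℕ) (hl : ∀ j ∈ l, 1 ≤ j ∧ j ≤ k) : ang k l ≤ k ^ l.length := by
  simpa [ang] using foldl_add_one_le l hl 0

lemma sum_vNat {t k : ℕ} {js : ℕ → ℕ} (hjs : validJs t k js) :
    ∑ i : Fin (t * k), vNat k js i = ∑ r ∈ Finset.range t, ang k ((List.range r).map js) := by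
  rw [← finProdFinEquiv.sum_comp, Fintype.sum_prod_type, ← Fin.sum_univ_eq_sum_range]
  refine Finset.sum_congr rfl fun r _ => ?_
  obtain ⟨h1, hjk⟩ := hjs r r.isLt
  simp only [finProdFinEquiv_apply_val, vNat_add_mul (Fin.isLt _)]
  rw [Fin.sum_univ_eq_sum_range (fun q => if q + 1 = js r then _ else 0),
    Finset.sum_eq_single (js r - 1)]
  · rw [if_pos (Nat.sub_add_cancel h1)]
  · exact fun q _ hq => if_neg (by omega)
  · exact fun h => absurd (Finset.mem_range.mpr (by omega)) h

lemma sum_vNat_le_geom_sum {t k : ℕ} {js : ℕ → ℕ} (hjs : validJs t k js) :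
    ∑ i : Fin (t * k), vNat k js i ≤ ∑ r ∈ Finset.range t, k ^ r := by
  rw [sum_vNat hjs]
  refine Finset.sum_le_sum fun r hr => ?_
  simpa using ang_le_pow ((List.range r).map js) fun j hj => by
    obtain ⟨m, hm, rfl⟩ := List.mem_map.mp hj
    exact hjs m ((List.mem_range.mp hm).trans (Finset.mem_range.mp hr))

def extendOne {t : ℕ} (j : Fin t → ℕ) (r : ℕ) : ℕ := if h : r < t then j ⟨r, h⟩ else 1

lemma extendOne_apply {t : ℕ} (j : Fin t → ℕ) (r : Fin t) : extendOne j r = j r := by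
  simp [extendOne]

def indexSet (t k : ℕ) : Finset (Fin t → ℕ) := Fintype.piFinset fun _ => Finset.Icc 1 k

lemma validJs_extendOne {t k : ℕ} {j : Fin t → ℕ} (hj : j ∈ indexSet t k) :
    validJs t k (extendOne j) := fun r hr => by
  simpa [extendOne, hr, indexSet] using Fintype.mem_piFinset.mp hj ⟨r, hr⟩

def vSet (t k : ℕ) : Finset (Fin (t * k) → ℕ) :=
  (indexSet t k).image fun j i => vNat k (extendOne j) i

lemma vNat_extendOne_restrict {t k : ℕ} (js : ℕ → ℕ) (i : Fin (t * k)) :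
    vNat k (extendOne fun r : Fin t => js r) i = vNat k js i :=
  vNat_congr fun r hr =>
    extendOne_apply _ ⟨r, hr.trans_lt (Nat.div_lt_of_lt_mul (mul_comm t k ▸ i.isLt))⟩

lemma memI_iff_mem_grid (t k : ℕ) (a : Fin (t * k) → ℕ) :
    memI t k a ↔ a ∈ grid (Fin (t * k)) (k ^ t) := by
  simp [memI, grid]

lemma atOne_iff (t k : ℕ) (a b : Fin (t * k) → ℕ) :
    AtOne t k a b ↔ ∃ d ∈ vSet t k, b = a + d := by
  constructor
  · rintro ⟨js, hjs, hab⟩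
    refine ⟨_, Finset.mem_image_of_mem _ (a := fun r : Fin t => js r) ?_, funext fun i => ?_⟩
    · simpa [indexSet] using fun r : Fin t => hjs r r.isLt
    · have := hab i
      rw [vVec_eq_vNat, ← vNat_extendOne_restrict] at this
      simp only [Pi.add_apply]
      omega
  · rintro ⟨d, hd, rfl⟩
    obtain ⟨j, hj, rfl⟩ := Finset.mem_image.mp hd
    exact ⟨extendOne j, validJs_extendOne hj, fun i => by simp [vVec_eq_vNat]⟩

lemma card_vSet (t k : ℕ) : #(vSet t k) = k ^ t := by
  rw [vSet, Finset.card_image_of_injOn, indexSet, Fintype.card_piFinset]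
  · simp
  intro j hj j' _ hjj'
  funext r
  obtain ⟨h1, hjk⟩ := validJs_extendOne hj r r.isLt
  rw [extendOne_apply] at h1 hjk
  have hq : j r - 1 < k := by omega
  set i : Fin (t * k) := finProdFinEquiv (r, ⟨j r - 1, hq⟩)
  have hi := congrFun hjj' i
  simp only [i, finProdFinEquiv_apply_val, vNat_add_mul hq, extendOne_apply,
    if_pos (Nat.sub_add_cancel h1)] at hi
  split_ifs at hi with h
  · omega
  · exact absurd hi (Nat.succ_ne_zero _)

lemma card_filter_add_notMem_grid_vSet_mul_le (t k : ℕ) :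
    #{q ∈ grid (Fin (t * k)) (k ^ t) ×ˢ vSet t k | q.1 + q.2 ∉ grid (Fin (t * k)) (k ^ t)} *
      (k - 1) ≤ (k ^ t) ^ (t * k) * k ^ t := by
  rcases Nat.eq_zero_or_pos k with rfl | hk
  · simp
  set B := #{q ∈ grid (Fin (t * k)) (k ^ t) ×ˢ vSet t k | q.1 + q.2 ∉ grid (Fin (t * k)) (k ^ t)}
  set S := ∑ r ∈ Finset.range t, k ^ r
  have hsum : ∑ d ∈ vSet t k, ∑ i, d i ≤ k ^ t * S := by
    have := Finset.sum_le_card_nsmul (vSet t k) (fun d => ∑ i, d i) S fun d hd => by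
      obtain ⟨j, hj, rfl⟩ := Finset.mem_image.mp hd
      exact sum_vNat_le_geom_sum (validJs_extendOne hj)
    rwa [card_vSet, smul_eq_mul] at this
  have hBS : B ≤ S * (k ^ t) ^ (t * k) := by
    have hB := card_filter_add_notMem_grid_product_mul_le (k ^ t) (vSet t k)
    rw [Fintype.card_fin] at hB
    refine Nat.le_of_mul_le_mul_right (hB.trans ?_) (by positivity : 0 < k ^ t)
    calc (∑ d ∈ vSet t k, ∑ i, d i) * (k ^ t) ^ (t * k) ≤ k ^ t * S * (k ^ t) ^ (t * k) := by
          gcongr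
      _ = S * (k ^ t) ^ (t * k) * k ^ t := by ring
  have hgeom : S * (k - 1) + 1 = k ^ t := by
    have := geom_sum_mul_add (k - 1) t
    rwa [Nat.sub_add_cancel (show 1 ≤ k from hk)] at this
  calc B * (k - 1) ≤ S * (k ^ t) ^ (t * k) * (k - 1) := by gcongr
    _ = (k ^ t) ^ (t * k) * (S * (k - 1)) := by ring
    _ ≤ (k ^ t) ^ (t * k) * k ^ t := by gcongr; omega

theorem stmt2_general (t k : ℕ) (hk : 2 ≤ k) :
    (1 - 1 / ((k : ℝ) - 1)) * (k : ℝ) ^ (t ^ 2 * k) * (k : ℝ) ^ t ≤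
      (Set.ncard {p : (Fin (t * k) → ℕ) × (Fin (t * k) → ℕ) |
        memI t k p.1 ∧ memI t k p.2 ∧ AtOne t k p.1 p.2} : ℝ) ∧
    (Set.ncard {p : (Fin (t * k) → ℕ) × (Fin (t * k) → ℕ) |
        memI t k p.1 ∧ memI t k p.2 ∧ AtOne t k p.1 p.2} : ℝ) ≤
      (k : ℝ) ^ (t ^ 2 * k) * (k : ℝ) ^ t := by
  simp_rw [memI_iff_mem_grid, atOne_iff, ncard_translate_pairs]
  set G := grid (Fin (t * k)) (k ^ t)
  have hsplit := card_filter_add_card_filter_not (s := G ×ˢ vSet t k) fun q => q.1 + q.2 ∈ G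
  rw [card_product, card_grid, card_vSet, Fintype.card_fin] at hsplit
  have hbad := card_filter_add_notMem_grid_vSet_mul_le t k
  set good := #{q ∈ G ×ˢ vSet t k | q.1 + q.2 ∈ G}
  set bad := #{q ∈ G ×ˢ vSet t k | q.1 + q.2 ∉ G}
  have hk1 : (0 : ℝ) < k - 1 := by rw [sub_pos]; exact_mod_cast hk
  have hsplitR : (good : ℝ) + bad = ((k : ℝ) ^ t) ^ (t * k) * (k : ℝ) ^ t := by
    exact_mod_cast hsplit
  have hbadR : (bad : ℝ) ≤ ((k : ℝ) ^ t) ^ (t * k) * (k : ℝ) ^ t / (k - 1) := by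
    rw [le_div_iff₀ hk1]
    have := (Nat.cast_le (α := ℝ)).mpr hbad
    push_cast [Nat.cast_sub (by omega : 1 ≤ k)] at this
    exact this
  rw [show t ^ 2 * k = t * (t * k) by ring, pow_mul]
  constructor
  · rw [sub_mul, sub_mul, one_mul, one_div_mul_eq_div, div_mul_eq_mul_div]
    linarith
  · linarith

/-- `(1 − 1/(k−1)) · n · k^t ≤ ‖A_t‖₁ ≤ n · k^t` where `n = k^(t²k)`. -/
theorem stmt2 (t k : ℕ) (ht : 2 ≤ t) (hk : 2 ≤ k) :
    (1 - 1 / ((k : ℝ) - 1)) * (k : ℝ) ^ (t ^ 2 * k) * (k : ℝ) ^ t ≤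
      (Set.ncard {p : (Fin (t * k) → ℕ) × (Fin (t * k) → ℕ) |
        memI t k p.1 ∧ memI t k p.2 ∧ AtOne t k p.1 p.2} : ℝ) ∧
    (Set.ncard {p : (Fin (t * k) → ℕ) × (Fin (t * k) → ℕ) |
        memI t k p.1 ∧ memI t k p.2 ∧ AtOne t k p.1 p.2} : ℝ) ≤
      (k : ℝ) ^ (t ^ 2 * k) * (k : ℝ) ^ t :=
  stmt2_general t k hk
end

section
/- Let a, b, c ∈ I with a < b lexicographically, and suppose A_t(a,c) = A_t(b,c) = 1, with c − a = v[i_1,…,i_t] and c − b = v[j_1,…,j_t]. Let r = type(a,b). Then i_q = j_q for all q < r, i_r < j_r, and the first coordinate (in the order (1,1),…,(1,k),(2,1),…,(t,k)) at which a and b differ is coordinate (r, i_r). -/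
lemma Nat.mul_add_div_of_lt {k q s : ℕ} (hs : s < k) : (q * k + s) / k = q := by
  rw [add_comm, Nat.add_mul_div_right _ _ (by omega), Nat.div_eq_of_lt hs, zero_add]

lemma vVec_nonneg (k : ℕ) (js : ℕ → ℕ) (i : ℕ) : 0 ≤ vVec k js i := by
  unfold vVec
  split_ifs <;> positivity

lemma vVec_pos_iff {k : ℕ} {js : ℕ → ℕ} {i : ℕ} : 0 < vVec k js i ↔ i % k + 1 = js (i / k) := by
  unfold vVec
  split_ifs with h
  · simp only [h, iff_true]
    exact_mod_cast Nat.succ_pos _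
  · simp [h]

lemma vVec_congr {k : ℕ} {is js : ℕ → ℕ} {i : ℕ} (h : ∀ q ≤ i / k, is q = js q) :
    vVec k is i = vVec k js i := by
  have hmap : (List.range (i / k)).map is = (List.range (i / k)).map js :=
    List.map_congr_left fun q hq => h q (List.mem_range.mp hq).le
  unfold vVec
  rw [h _ le_rfl, hmap]

lemma eq_of_vVec_eq_at_support {k q : ℕ} {is js : ℕ → ℕ} (h1 : 1 ≤ is q) (hk : is q ≤ k)
    (h : vVec k is (q * k + (is q - 1)) = vVec k js (q * k + (is q - 1))) : js q = is q := by
  have hs : is q - 1 < k := by omega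
  have hpos : 0 < vVec k is (q * k + (is q - 1)) := by
    rw [vVec_pos_iff, Nat.mul_add_div_of_lt hs, Nat.mul_add_mod_of_lt hs]
    omega
  rw [h, vVec_pos_iff, Nat.mul_add_div_of_lt hs, Nat.mul_add_mod_of_lt hs] at hpos
  omega

lemma typeOf_eq_of_first_ne {t k : ℕ} {a b : Fin (t * k) → ℕ} (i₀ : Fin (t * k))
    (hpre : ∀ j, j < i₀ → a j = b j) (hne : a i₀ ≠ b i₀) : typeOf t k a b = i₀.val / k + 1 := by
  refine le_antisymm (Nat.sInf_le ⟨i₀, rfl, hne⟩) (le_csInf ⟨_, i₀, rfl, hne⟩ ?_)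
  rintro _ ⟨i, rfl, hi⟩
  have : i₀ ≤ i := not_lt.mp fun hlt => hi (hpre i hlt)
  exact Nat.succ_le_succ (Nat.div_le_div_right this)

lemma blocks_of_first_vVec_lt {t k : ℕ} {is js : ℕ → ℕ} (his : validJs t k is)
    (hjs : validJs t k js) {i₀ : ℕ} (hi₀t : i₀ < t * k)
    (hagree : ∀ m < i₀, vVec k is m = vVec k js m) (hlt : vVec k js i₀ < vVec k is i₀) :
    (∀ q < i₀ / k, is q = js q) ∧ is (i₀ / k) < js (i₀ / k) ∧
      i₀ = i₀ / k * k + (is (i₀ / k) - 1) := by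
  set p := i₀ / k with hp
  have hpt : p < t := Nat.div_lt_of_lt_mul (mul_comm t k ▸ hi₀t)
  have hi₀ : i₀ % k + 1 = is p := vVec_pos_iff.mp ((vVec_nonneg k js i₀).trans_lt hlt)
  have hi₀_eq : i₀ = p * k + (is p - 1) := by
    have := Nat.div_add_mod' i₀ k
    rw [← hp] at this
    omega
  have hprefix : ∀ q < p, is q = js q := fun q hq => by
    obtain ⟨h1, hk⟩ := his q (hq.trans hpt)
    refine (eq_of_vVec_eq_at_support h1 hk (hagree _ (Nat.lt_of_div_lt_div (c := k) ?_))).symm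
    rw [Nat.mul_add_div_of_lt (by omega)]
    exact hq
  refine ⟨hprefix, ?_, hi₀_eq⟩
  obtain ⟨hj1, hjk⟩ := hjs p hpt
  rcases lt_trichotomy (is p) (js p) with h | h | h
  · exact h
  · have : vVec k is i₀ = vVec k js i₀ := vVec_congr fun q hq =>
      (Nat.lt_or_eq_of_le hq).elim (hprefix q) (· ▸ h)
    exact absurd this hlt.ne'
  · have := eq_of_vVec_eq_at_support hj1 hjk (hagree _ (by omega)).symm
    omega

theorem stmt4_general (t k : ℕ)
    (a b c : Fin (t * k) → ℕ)
    (hab : lexLt a b)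
    (is js : ℕ → ℕ) (his : validJs t k is) (hjs : validJs t k js)
    (hca : ∀ i : Fin (t * k), (c i : ℤ) - (a i : ℤ) = vVec k is i.val)
    (hcb : ∀ i : Fin (t * k), (c i : ℤ) - (b i : ℤ) = vVec k js i.val)
    (r : ℕ) (hr : r = typeOf t k a b) :
    (∀ q, q + 1 < r → is q = js q) ∧
    is (r - 1) < js (r - 1) ∧
    (∀ i : Fin (t * k),
      (i.val < (r - 1) * k + (is (r - 1) - 1) → a i = b i) ∧
      (i.val = (r - 1) * k + (is (r - 1) - 1) → a i ≠ b i)) := by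
  obtain ⟨i₀, hpre, hlt⟩ := hab
  have hrp : r - 1 = i₀.val / k := by
    rw [hr, typeOf_eq_of_first_ne i₀ hpre hlt.ne, Nat.add_sub_cancel]
  have hagree : ∀ m < i₀.val, vVec k is m = vVec k js m := fun m hm => by
    have hab : a ⟨m, hm.trans i₀.isLt⟩ = b ⟨m, hm.trans i₀.isLt⟩ := hpre _ hm
    linarith [hca ⟨m, hm.trans i₀.isLt⟩, hcb ⟨m, hm.trans i₀.isLt⟩]
  have hdiff : vVec k js i₀ < vVec k is i₀ := by
    have : (a i₀ : ℤ) < b i₀ := by exact_mod_cast hlt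
    linarith [hca i₀, hcb i₀]
  obtain ⟨hprefix, hblock, hi₀⟩ := blocks_of_first_vVec_lt his hjs i₀.isLt hagree hdiff
  rw [hrp]
  refine ⟨fun q hq => hprefix q (by omega), hblock, fun i => ⟨fun hi => ?_, fun hi => ?_⟩⟩
  · exact hpre i (by rw [Fin.lt_def]; omega)
  · rw [Fin.ext (show i.val = i₀.val by omega)]
    exact hlt.ne

/-- If `a < b`, `A_t(a,c) = A_t(b,c) = 1` with `c − a = v[i_1,…,i_t]`,
`c − b = v[j_1,…,j_t]`, and `r = type(a,b)`, then `i_q = j_q` for `q < r`,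
`i_r < j_r`, and the first coordinate where `a` and `b` differ is `(r, i_r)`
(flat 0-indexed coordinate `(r−1)·k + (i_r − 1)`).
Here `is q` is `i_{q+1}` and `js q` is `j_{q+1}`. -/
theorem stmt4 (t k : ℕ) (ht : 2 ≤ t) (hk : 2 ≤ k)
    (a b c : Fin (t * k) → ℕ)
    (ha : memI t k a) (hb : memI t k b) (hc : memI t k c)
    (hab : lexLt a b)
    (is js : ℕ → ℕ) (his : validJs t k is) (hjs : validJs t k js)
    (hca : ∀ i : Fin (t * k), (c i : ℤ) - (a i : ℤ) = vVec k is i.val)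
    (hcb : ∀ i : Fin (t * k), (c i : ℤ) - (b i : ℤ) = vVec k js i.val)
    (r : ℕ) (hr : r = typeOf t k a b) :
    (∀ q, q + 1 < r → is q = js q) ∧
    is (r - 1) < js (r - 1) ∧
    (∀ i : Fin (t * k),
      (i.val < (r - 1) * k + (is (r - 1) - 1) → a i = b i) ∧
      (i.val = (r - 1) * k + (is (r - 1) - 1) → a i ≠ b i)) :=
  stmt4_general t k a b c hab is js his hjs hca hcb r hr
end

section
/- Let a, b, c_1, c_2, d ∈ I with a < b and c_1 < c_2 < d lexicographically, and suppose A_t(b,c_1) = A_t(a,c_2) = A_t(b,d) = A_t(a,d) = 1. Then it is not possible that type(a,b) = type(c_1,d) and type(c_1,d) = type(c_2,d). -/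
/-!
Write `v[P] - v[M]` for a difference of two vectors of `S`. Since `v[j_1,…,j_t]` restricted to
the blocks before `m` depends only on `j_1,…,j_{m-1}`, such a difference vanishes before the
first block `m` where `P` and `M` diverge, and on block `m` it is `+V` at coordinate `P m` and
`-V` at coordinate `M m`, with the same value `V = ⟨P_1,…,P_{m-1}⟩ > 0`. Hence if
`y - x = v[P] - v[M]` and `x < y`, then `type(x,y) = m + 1` and `P m < M m`.

With `c₁ - b = v₁`, `c₂ - a = v₂`, `d - b = v₃`, `d - a = v₄` we get `b - a = v₄ - v₃`,
`d - c₂ = v₄ - v₂` and `d - c₁ = v₃ - v₁`, so when the three types agree all four sequences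
agree below a common block `m`, where `v₄` has the smallest entry. Then `c₂ - c₁ = (v₂ - v₁) + (v₃ - v₄)` vanishes before block `m` and also on block `m`
up to the coordinate of `v₄`, where it equals `-V < 0`; so `c₂ < c₁`.
-/

lemma lexLt_asymm {N : ℕ} {x y : Fin N → ℕ} (hxy : lexLt x y) : ¬ lexLt y x := by
  rintro ⟨j, hj, hyx⟩
  obtain ⟨i, hi, hxy⟩ := hxy
  rcases lt_trichotomy i j with h | rfl | h
  · have := hj i h; omega
  · omega
  · have := hi j h; omega

lemma lexLt_trans {N : ℕ} {x y z : Fin N → ℕ} (hxy : lexLt x y) (hyz : lexLt y z) :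
    lexLt x z := by
  obtain ⟨i, hi, hi'⟩ := hxy
  obtain ⟨j, hj, hj'⟩ := hyz
  rcases lt_trichotomy i j with h | rfl | h
  · exact ⟨i, fun l hl => (hi l hl).trans (hj l (hl.trans h)), hj i h ▸ hi'⟩
  · exact ⟨i, fun l hl => (hi l hl).trans (hj l hl), hi'.trans hj'⟩
  · exact ⟨j, fun l hl => (hi l (hl.trans h)).trans (hj l hl), (hi j h).symm ▸ hj'⟩

lemma Nat.div_lt_div_or_mod_lt_of_lt {i p k : ℕ} (h : i < p) :
    i / k < p / k ∨ i / k = p / k ∧ i % k < p % k := by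
  have hi := Nat.div_add_mod i k
  have hp := Nat.div_add_mod p k
  rcases (Nat.div_le_div_right (c := k) h.le).lt_or_eq with hlt | heq
  · exact Or.inl hlt
  · refine Or.inr ⟨heq, ?_⟩
    rw [heq] at hi
    omega

lemma lexLt_of_block {N k : ℕ} {x y : Fin N → ℕ} (p : Fin N)
    (hbefore : ∀ i : Fin N, (i : ℕ) / k < p / k → x i = y i)
    (hblock : ∀ i : Fin N, (i : ℕ) / k = p / k → (i : ℕ) % k < p % k → x i = y i)
    (hp : x p < y p) : lexLt x y := by
  refine ⟨p, fun i hi => ?_, hp⟩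
  rcases Nat.div_lt_div_or_mod_lt_of_lt (k := k) (Fin.lt_def.mp hi) with h | ⟨h, h'⟩
  exacts [hbefore i h, hblock i h h']

lemma exists_fin_div_mod {t k m j : ℕ} (hm : m < t) (hj : 1 ≤ j ∧ j ≤ k) :
    ∃ i : Fin (t * k), (i : ℕ) / k = m ∧ (i : ℕ) % k + 1 = j := by
  have hk : 0 < k := by omega
  refine ⟨⟨j - 1 + m * k, ?_⟩, ?_, ?_⟩
  · calc j - 1 + m * k < (m + 1) * k := by rw [Nat.succ_mul]; omega
      _ ≤ t * k := Nat.mul_le_mul_right k hm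
  · rw [Nat.add_mul_div_right _ _ hk, Nat.div_eq_of_lt (by omega), zero_add]
  · rw [Nat.add_mul_mod_self_right, Nat.mod_eq_of_lt (by omega)]
    omega

lemma typeOf_eq {t k m : ℕ} {x y : Fin (t * k) → ℕ}
    (hbefore : ∀ i : Fin (t * k), (i : ℕ) / k < m → x i = y i)
    (i : Fin (t * k)) (hi : (i : ℕ) / k = m) (hne : x i ≠ y i) :
    typeOf t k x y = m + 1 := by
  refine le_antisymm (Nat.sInf_le ⟨i, by rw [hi], hne⟩) (le_csInf ⟨_, i, rfl, hne⟩ ?_)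
  rintro r ⟨j, rfl, hj⟩
  by_contra! h
  exact hj (hbefore j (by omega))

lemma ang_pos (k : ℕ) (l : List ℕ) : 1 ≤ ang k l := Nat.le_add_left 1 _

lemma ang_map_range_congr {k m : ℕ} {P M : ℕ → ℕ} (h : ∀ r < m, P r = M r) :
    ang k ((List.range m).map P) = ang k ((List.range m).map M) := by
  rw [List.map_congr_left fun r hr => h r (List.mem_range.mp hr)]

lemma vVec_of_div_eq {k m i : ℕ} (js : ℕ → ℕ) (h : i / k = m) :
    vVec k js i = if i % k + 1 = js m then (ang k ((List.range m).map js) : ℤ) else 0 := by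
  subst h
  rfl

lemma vVec_congr_s6 {k m i : ℕ} {P M : ℕ → ℕ} (h : ∀ r < m, P r = M r) (hi : i / k < m) :
    vVec k P i = vVec k M i := by
  rw [vVec_of_div_eq P rfl, vVec_of_div_eq M rfl, h _ hi,
    ang_map_range_congr fun r hr => h r (hr.trans hi)]

lemma vVec_eq_zero_of_mod_lt {k m i : ℕ} {js : ℕ → ℕ} (hi : i / k = m)
    (hlt : i % k + 1 < js m) :
    vVec k js i = 0 := by
  rw [vVec_of_div_eq js hi, if_neg hlt.ne]

theorem typeOf_eq_of_sub_eq_vVec_sub {t k : ℕ} {x y : Fin (t * k) → ℕ} {P M : ℕ → ℕ}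
    (hP : validJs t k P) (hM : validJs t k M) (hxy : lexLt x y)
    (hv : ∀ i : Fin (t * k), (y i : ℤ) - x i = vVec k P i - vVec k M i) :
    ∃ m < t, typeOf t k x y = m + 1 ∧ (∀ r < m, P r = M r) ∧ P m < M m := by
  classical
  have hex : ∃ r, r < t ∧ P r ≠ M r := by
    by_contra! h
    obtain ⟨i, -, hi⟩ := hxy
    have := hv i
    rw [vVec_congr_s6 h (Nat.div_lt_of_lt_mul (Nat.mul_comm t k ▸ i.isLt))] at this
    omega
  obtain ⟨hmt, hPM⟩ := Nat.find_spec hex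
  set m := Nat.find hex
  have hagree : ∀ r < m, P r = M r := fun r hr => by
    by_contra hne
    exact Nat.find_min hex hr ⟨hr.trans hmt, hne⟩
  have hbefore : ∀ i : Fin (t * k), (i : ℕ) / k < m → x i = y i := fun i hi => by
    have := hv i
    rw [vVec_congr_s6 hagree hi] at this
    omega
  have hV := ang_pos k ((List.range m).map P)
  have hblock : ∀ i : Fin (t * k), (i : ℕ) / k = m → (y i : ℤ) - x i =
      (if (i : ℕ) % k + 1 = P m then (ang k ((List.range m).map P) : ℤ) else 0) -
        if (i : ℕ) % k + 1 = M m then (ang k ((List.range m).map P) : ℤ) else 0 := by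
    intro i hi
    rw [hv i, vVec_of_div_eq P hi, vVec_of_div_eq M hi, ang_map_range_congr hagree]
  rcases hPM.lt_or_gt with hlt | hgt
  · obtain ⟨p, hpm, hpj⟩ := exists_fin_div_mod hmt (hP m hmt)
    refine ⟨m, hmt, typeOf_eq hbefore p hpm ?_, hagree, hlt⟩
    have := hblock p hpm
    rw [if_pos hpj, if_neg (by omega)] at this
    omega
  · obtain ⟨p, hpm, hpj⟩ := exists_fin_div_mod hmt (hM m hmt)
    refine absurd (lexLt_of_block (k := k) p (fun i hi => ?_) (fun i hi hq => ?_) ?_)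
      (lexLt_asymm hxy)
    · exact (hbefore i (hpm ▸ hi)).symm
    · have := hblock i (hi.trans hpm)
      rw [if_neg (by omega), if_neg (by omega)] at this
      omega
    · have := hblock p hpm
      rw [if_neg (by omega), if_pos hpj] at this
      omega

theorem lexLt_of_sub_eq_vVec_sub_add {t k m : ℕ} {x y : Fin (t * k) → ℕ}
    {P₁ M₁ P₂ M₂ : ℕ → ℕ} (hm : m < t) (hM₂ : validJs t k M₂)
    (h₁ : ∀ r < m, P₁ r = M₁ r) (h₂ : ∀ r < m, P₂ r = M₂ r)
    (hP₁ : M₂ m < P₁ m) (hM₁ : M₂ m < M₁ m) (hP₂ : M₂ m < P₂ m)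
    (hv : ∀ i : Fin (t * k), (y i : ℤ) - x i =
      vVec k P₁ i - vVec k M₁ i + (vVec k P₂ i - vVec k M₂ i)) :
    lexLt y x := by
  obtain ⟨p, hpm, hpj⟩ := exists_fin_div_mod hm (hM₂ m hm)
  refine lexLt_of_block (k := k) p (fun i hi => ?_) (fun i hi hq => ?_) ?_
  · have := hv i
    rw [vVec_congr_s6 h₁ (hpm ▸ hi), vVec_congr_s6 h₂ (hpm ▸ hi)] at this
    omega
  · have := hv i
    rw [hpm] at hi
    rw [vVec_eq_zero_of_mod_lt hi (by omega), vVec_eq_zero_of_mod_lt hi (by omega),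
      vVec_eq_zero_of_mod_lt hi (by omega), vVec_eq_zero_of_mod_lt hi (by omega)] at this
    omega
  · have := hv p
    have hV := ang_pos k ((List.range m).map M₂)
    rw [vVec_eq_zero_of_mod_lt hpm (by omega), vVec_eq_zero_of_mod_lt hpm (by omega),
      vVec_eq_zero_of_mod_lt hpm (by omega), vVec_of_div_eq M₂ hpm, if_pos hpj] at this
    omega

theorem stmt6_general (t k : ℕ)
    (a b c₁ c₂ d : Fin (t * k) → ℕ)
    (hab : lexLt a b) (h12 : lexLt c₁ c₂) (h2d : lexLt c₂ d)
    (e1 : AtOne t k b c₁) (e2 : AtOne t k a c₂)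
    (e3 : AtOne t k b d) (e4 : AtOne t k a d) :
    ¬ (typeOf t k a b = typeOf t k c₁ d ∧ typeOf t k c₁ d = typeOf t k c₂ d) := by
  rintro ⟨hT₁, hT₂⟩
  obtain ⟨js₁, hv₁, he₁⟩ := e1
  obtain ⟨js₂, hv₂, he₂⟩ := e2
  obtain ⟨js₃, hv₃, he₃⟩ := e3
  obtain ⟨js₄, hv₄, he₄⟩ := e4
  obtain ⟨m, hmt, hm, hagree₄₃, hlt₄₃⟩ := typeOf_eq_of_sub_eq_vVec_sub hv₄ hv₃ hab
    fun i => by linarith [he₃ i, he₄ i]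
  obtain ⟨m', -, hm', hagree₄₂, hlt₄₂⟩ := typeOf_eq_of_sub_eq_vVec_sub hv₄ hv₂ h2d
    fun i => by linarith [he₂ i, he₄ i]
  obtain ⟨m'', -, hm'', hagree₃₁, hlt₃₁⟩ := typeOf_eq_of_sub_eq_vVec_sub hv₃ hv₁
    (lexLt_trans h12 h2d) fun i => by linarith [he₁ i, he₃ i]
  have hm'm : m' = m := by omega
  have hm''m : m'' = m := by omega
  subst m' m''
  have hagree₂₁ : ∀ r < m, js₂ r = js₁ r := fun r hr => by
    rw [← hagree₄₂ r hr, hagree₄₃ r hr, hagree₃₁ r hr]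
  exact lexLt_asymm h12 (lexLt_of_sub_eq_vVec_sub_add (P₂ := js₃) hmt hv₄ hagree₂₁
    (fun r hr => (hagree₄₃ r hr).symm) hlt₄₂ (hlt₄₃.trans hlt₃₁) hlt₄₃
    fun i => by linarith [he₁ i, he₂ i, he₃ i, he₄ i])

/-- If `a < b`, `c₁ < c₂ < d` and `A_t(b,c₁) = A_t(a,c₂) = A_t(b,d) = A_t(a,d) = 1`,
then it is impossible that `type(a,b) = type(c₁,d) = type(c₂,d)`. -/
theorem stmt6 (t k : ℕ) (ht : 2 ≤ t) (hk : 2 ≤ k)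
    (a b c₁ c₂ d : Fin (t * k) → ℕ)
    (ha : memI t k a) (hb : memI t k b)
    (hc₁ : memI t k c₁) (hc₂ : memI t k c₂) (hd : memI t k d)
    (hab : lexLt a b) (h12 : lexLt c₁ c₂) (h2d : lexLt c₂ d)
    (e1 : AtOne t k b c₁) (e2 : AtOne t k a c₂)
    (e3 : AtOne t k b d) (e4 : AtOne t k a d) :
    ¬ (typeOf t k a b = typeOf t k c₁ d ∧ typeOf t k c₁ d = typeOf t k c₂ d) :=
  stmt6_general t k a b c₁ c₂ d hab h12 h2d e1 e2 e3 e4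
end

section
/- Let a, b, c_0, c_1, c_2, d ∈ I with a < b and c_0 < c_1 < c_2 < d lexicographically, and suppose A_t(a,c_0) = A_t(b,c_1) = A_t(a,c_2) = A_t(b,d) = A_t(a,d) = 1. If type(a,b) ≤ type(c_0,d), then type(c_0,d) < type(c_2,d). -/
/-!
Write `d = a + v[J] = b + v[L]`, `c₀ = a + v[U]`, `c₁ = b + v[K]`, `c₂ = a + v[W]`. In
`v[J] - v[P]` every block before the first block `r` where `J` and `P` differ vanishes, and block
`r` is `⟨J_1,…,J_r⟩ (e_{J r} - e_{P r})`. Hence the types of `(c₀, d)`, `(c₂, d)` and `(a, b)`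
are `p + 1`, `q + 1`, `m + 1`, where `J` first drops below `U`, `W`, `L` at `p`, `q`, `m`.

Suppose `q ≤ p`. Then `c₁ - c₀ = v[J] + v[K] - v[U] - v[L]` and `c₂ - c₁ = v[W] + v[L] - v[J] - v[K]`
are both lexicographically positive. In a block `r < q` where `K` and `L` agree before `r`, the
two rows are `±c (e_{K r} - e_{L r})`, which forces `K r = L r`; so `K = L` below `q`. In block
`q` the rows are `α e_j + β e_κ - α e_u - β e_l` and `α e_w + β e_l - α e_j - β e_κ` with
`α = ⟨J_{<q}⟩ ≤ β = ⟨L_{<q}⟩`, `j < w`, `j ≤ u`, and `α < β` when `l = j < u` (then `q = p`, so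
`m < q` because `m ≤ p`); a look at the leading entries shows that one of the rows is negative.
-/

namespace AtMatrix

/-- `⟨j_1,…,j_r⟩ - 1`, the number with base-`k` digits `j_1 - 1, …, j_r - 1`. -/
def prefixValue (k : ℕ) (js : ℕ → ℕ) (r : ℕ) : ℕ :=
  ((List.range r).map js).foldl (fun acc j => acc * k + (j - 1)) 0

lemma ang_map_range (k : ℕ) (js : ℕ → ℕ) (r : ℕ) :
    ang k ((List.range r).map js) = prefixValue k js r + 1 := rfl

lemma prefixValue_succ (k : ℕ) (js : ℕ → ℕ) (r : ℕ) :
    prefixValue k js (r + 1) = prefixValue k js r * k + (js r - 1) := by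
  simp [prefixValue, List.range_succ]

lemma prefixValue_congr {k : ℕ} {js js' : ℕ → ℕ} {r : ℕ} (h : ∀ r' < r, js r' = js' r') :
    prefixValue k js r = prefixValue k js' r := by
  unfold prefixValue
  rw [List.map_congr_left fun x hx => h x (List.mem_range.mp hx)]

lemma prefixValue_lt_of_firstDiff {t k : ℕ} {js js' : ℕ → ℕ} {m r : ℕ} (hjs : validJs t k js)
    (hrt : r ≤ t) (hmr : m < r) (hpre : ∀ r' < m, js r' = js' r') (hm : js m < js' m) :
    prefixValue k js r < prefixValue k js' r := by
  induction r with
  | zero => omega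
  | succ n ih =>
    rw [prefixValue_succ, prefixValue_succ]
    rcases Nat.lt_or_ge m n with hmn | hmn
    · have hlt := ih (by omega) hmn
      have hn := hjs n (by omega)
      have : (prefixValue k js n + 1) * k ≤ prefixValue k js' n * k := Nat.mul_le_mul_right k hlt
      rw [Nat.succ_mul] at this
      omega
    · obtain rfl : m = n := by omega
      rw [prefixValue_congr hpre]
      have := hjs m (by omega)
      omega

/-- The row of block `r` (0-indexed) of `v[js]`, with positions numbered from 1. -/
def vRow (k : ℕ) (js : ℕ → ℕ) (r : ℕ) : ℕ → ℤ :=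
  Pi.single (js r) ((prefixValue k js r : ℤ) + 1)

lemma vVec_eq_vRow (k : ℕ) (js : ℕ → ℕ) (i : ℕ) : vVec k js i = vRow k js (i / k) (i % k + 1) := by
  simp [vVec, vRow, Pi.single_apply, ang_map_range]

lemma vRow_congr {k : ℕ} {js js' : ℕ → ℕ} {r : ℕ} (h : ∀ r' ≤ r, js r' = js' r') :
    vRow k js r = vRow k js' r := by
  rw [vRow, vRow, h r le_rfl, prefixValue_congr fun r' hr' => h r' hr'.le]

lemma vVec_congr {k : ℕ} {js js' : ℕ → ℕ} {i : ℕ} (h : ∀ r' ≤ i / k, js r' = js' r') :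
    vVec k js i = vVec k js' i := by
  rw [vVec_eq_vRow, vVec_eq_vRow, vRow_congr h]

lemma exists_index_div_mod {t k r s : ℕ} (hr : r < t) (hs : s < k) :
    ∃ i : Fin (t * k), i.val / k = r ∧ i.val % k = s := by
  have hk : 0 < k := by omega
  have : k * r + s < t * k := by nlinarith
  refine ⟨⟨k * r + s, this⟩, ?_, ?_⟩
  · simp [Nat.mul_add_div hk, Nat.div_eq_of_lt hs]
  · simp [Nat.mod_eq_of_lt hs]

lemma div_lt_div_or_of_lt {j i k : ℕ} (h : j < i) :
    j / k < i / k ∨ (j / k = i / k ∧ j % k < i % k) := by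
  rcases (Nat.div_le_div_right (c := k) h.le).lt_or_eq with hlt | heq
  · exact Or.inl hlt
  · refine Or.inr ⟨heq, ?_⟩
    have := Nat.div_add_mod j k
    have := Nat.div_add_mod i k
    rw [heq] at *
    omega

def LeadingNonneg (k : ℕ) (f : ℕ → ℤ) : Prop :=
  ∀ s, 1 ≤ s → s ≤ k → (∀ s' < s, f s' = 0) → 0 ≤ f s

lemma leadingNonneg_of_lexLt {t k r : ℕ} {x y : Fin (t * k) → ℕ} (hxy : lexLt x y) (hr : r < t)
    (hpre : ∀ i : Fin (t * k), i.val / k < r → x i = y i) {f : ℕ → ℤ}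
    (hf : ∀ i : Fin (t * k), i.val / k = r → (y i : ℤ) - x i = f (i.val % k + 1)) :
    LeadingNonneg k f := by
  intro s hs hsk hzero
  obtain ⟨i₀, hdiv, hmod⟩ := exists_index_div_mod hr (show s - 1 < k by omega)
  have hle : x i₀ ≤ y i₀ := by
    refine Pi.apply_le_of_toLex (show toLex x ≤ toLex y from le_of_lt hxy) fun j hj => ?_
    rcases div_lt_div_or_of_lt (k := k) (Fin.lt_def.mp hj) with hlt | ⟨heq, hlt⟩
    · exact hpre j (hdiv ▸ hlt)
    · have := hf j (heq.trans hdiv)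
      rw [hzero _ (by omega)] at this
      omega
  have := hf i₀ hdiv
  rw [hmod, Nat.sub_add_cancel hs] at this
  omega

lemma typeOf_eq {t k r : ℕ} {x y : Fin (t * k) → ℕ}
    (hpre : ∀ i : Fin (t * k), i.val / k < r → x i = y i)
    {i₀ : Fin (t * k)} (hi₀ : i₀.val / k = r) (hne : x i₀ ≠ y i₀) :
    typeOf t k x y = r + 1 := by
  have hmem : r + 1 ∈ {r | ∃ i : Fin (t * k), i.val / k + 1 = r ∧ x i ≠ y i} :=
    ⟨i₀, by omega, hne⟩
  refine le_antisymm (Nat.sInf_le hmem) (le_csInf ⟨_, hmem⟩ ?_)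
  rintro _ ⟨i, rfl, hi⟩
  by_contra hlt
  exact hi (hpre i (by omega))

lemma exists_firstDiff_of_lexLt {t k : ℕ} {x y : Fin (t * k) → ℕ} {J P : ℕ → ℕ}
    (hJ : validJs t k J) (hP : validJs t k P) (hxy : lexLt x y)
    (hdiff : ∀ i, (y i : ℤ) - x i = vVec k J i - vVec k P i) :
    ∃ r < t, (∀ r' < r, J r' = P r') ∧ J r < P r ∧ typeOf t k x y = r + 1 := by
  have hex : ∃ r, r < t ∧ J r ≠ P r := by
    by_contra! hall
    obtain ⟨i, -, hi⟩ := hxy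
    have hit : i.val / k < t := Nat.div_lt_of_lt_mul (by simp [Nat.mul_comm, i.isLt])
    have := hdiff i
    rw [vVec_congr fun r' hr' => hall r' (by omega)] at this
    omega
  obtain ⟨hrt, hne⟩ := Nat.find_spec hex
  set r := Nat.find hex
  have hpre : ∀ r' < r, J r' = P r' := fun r' hr' =>
    not_not.mp fun h => Nat.find_min hex hr' ⟨by omega, h⟩
  have hagree : ∀ i : Fin (t * k), i.val / k < r → x i = y i := fun i hi => by
    have := hdiff i
    rw [vVec_congr fun r' hr' => hpre r' (by omega)] at this
    omega
  have hrow : ∀ i : Fin (t * k), i.val / k = r →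
      (y i : ℤ) - x i = (vRow k J r - vRow k P r) (i.val % k + 1) := fun i hi => by
    rw [hdiff i, vVec_eq_vRow, vVec_eq_vRow, hi, Pi.sub_apply]
  have hJr := hJ r hrt
  have hPr := hP r hrt
  refine ⟨r, hrt, hpre, ?_, ?_⟩
  · by_contra! hle
    have := leadingNonneg_of_lexLt hxy hrt hagree hrow (P r) hPr.1 hPr.2 fun s' hs' => by
      rw [Pi.sub_apply, vRow, vRow, Pi.single_eq_of_ne (by omega), Pi.single_eq_of_ne (by omega),
        sub_zero]
    rw [Pi.sub_apply, vRow, vRow, Pi.single_eq_of_ne (by omega), Pi.single_eq_same] at this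
    omega
  · obtain ⟨i₀, hdiv, hmod⟩ := exists_index_div_mod hrt (show J r - 1 < k by omega)
    refine typeOf_eq hagree hdiv fun h => ?_
    have := hrow i₀ hdiv
    rw [hmod, Nat.sub_add_cancel hJr.1, Pi.sub_apply, vRow, vRow, Pi.single_eq_same,
      Pi.single_eq_of_ne hne, h] at this
    omega

lemma leadingNonneg_vRow_of_lexLt {t k r : ℕ} {x y : Fin (t * k) → ℕ} {A B C D : ℕ → ℕ}
    (hxy : lexLt x y) (hr : r < t)
    (hdiff : ∀ i, (y i : ℤ) - x i = vVec k A i + vVec k B i - vVec k C i - vVec k D i)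
    (hAC : ∀ r' < r, A r' = C r') (hBD : ∀ r' < r, B r' = D r') :
    LeadingNonneg k (vRow k A r + vRow k B r - vRow k C r - vRow k D r) := by
  refine leadingNonneg_of_lexLt hxy hr (fun i hi => ?_) fun i hi => ?_
  · have := hdiff i
    rw [vVec_congr fun r' hr' => hAC r' (by omega), vVec_congr fun r' hr' => hBD r' (by omega)]
      at this
    omega
  · simp only [hdiff i, vVec_eq_vRow, hi, Pi.sub_apply, Pi.add_apply]

lemma eq_of_leadingNonneg_single_sub {k a b : ℕ} {c : ℤ} (ha : 1 ≤ a ∧ a ≤ k)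
    (hb : 1 ≤ b ∧ b ≤ k) (hc : 0 < c)
    (hab : LeadingNonneg k (Pi.single a c - Pi.single b c))
    (hba : LeadingNonneg k (Pi.single b c - Pi.single a c)) : a = b := by
  by_contra hne
  rcases Nat.lt_or_gt_of_ne hne with h | h
  · have := hba a ha.1 ha.2 fun s hs => by
      rw [Pi.sub_apply, Pi.single_eq_of_ne (by omega), Pi.single_eq_of_ne (by omega), sub_zero]
    rw [Pi.sub_apply, Pi.single_eq_of_ne hne, Pi.single_eq_same] at this
    omega
  · have := hab b hb.1 hb.2 fun s hs => by
      rw [Pi.sub_apply, Pi.single_eq_of_ne (by omega), Pi.single_eq_of_ne (by omega), sub_zero]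
    rw [Pi.sub_apply, Pi.single_eq_of_ne (Ne.symm hne), Pi.single_eq_same] at this
    omega

lemma false_of_leadingNonneg_rows {k j u w l κ : ℕ} {α β : ℤ} (hj : 1 ≤ j ∧ j ≤ k)
    (hl : 1 ≤ l ∧ l ≤ k) (hκ : 1 ≤ κ) (hα : 0 < α) (hαβ : α ≤ β) (hjw : j < w)
    (hju : j ≤ u) (hstrict : l = j → j < u → α < β)
    (h₁ : LeadingNonneg k (Pi.single j α + Pi.single κ β - Pi.single u α - Pi.single l β))
    (h₂ : LeadingNonneg k (Pi.single w α + Pi.single l β - Pi.single j α - Pi.single κ β)) :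
    False := by
  simp only [LeadingNonneg, Pi.add_apply, Pi.sub_apply, Pi.single_apply] at h₁ h₂
  rcases lt_trichotomy κ l with hκl | rfl | hlκ
  · have := h₂ (min j κ) (by omega) (by omega) fun s hs => by split_ifs <;> omega
    split_ifs at this <;> omega
  · have := h₂ j hj.1 hj.2 fun s hs => by split_ifs <;> omega
    split_ifs at this <;> omega
  · by_cases hjl : j < l
    · have := h₂ j hj.1 hj.2 fun s hs => by split_ifs <;> omega
      split_ifs at this <;> omega
    · have := h₁ l hl.1 hl.2 fun s hs => by split_ifs <;> omega
      split_ifs at this <;> omega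

/-- The block-`r` rows of `c₁ - c₀` and `c₂ - c₁` when `c₀ = a + v[U]`, `c₁ = b + v[K]`,
`c₂ = a + v[W]` and `d = a + v[J] = b + v[L]` are both lexicographically nonnegative. -/
def RowsNonneg (k : ℕ) (J U W K L : ℕ → ℕ) (r : ℕ) : Prop :=
  LeadingNonneg k (vRow k J r + vRow k K r - vRow k U r - vRow k L r) ∧
    LeadingNonneg k (vRow k W r + vRow k L r - vRow k J r - vRow k K r)

lemma rowsNonneg_of_lexLt {t k r : ℕ} {c₀ c₁ c₂ : Fin (t * k) → ℕ} {J U W K L : ℕ → ℕ}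
    (h01 : lexLt c₀ c₁) (h12 : lexLt c₁ c₂)
    (hD1 : ∀ i, (c₁ i : ℤ) - c₀ i = vVec k J i + vVec k K i - vVec k U i - vVec k L i)
    (hD2 : ∀ i, (c₂ i : ℤ) - c₁ i = vVec k W i + vVec k L i - vVec k J i - vVec k K i)
    (hr : r < t) (hU : ∀ r' < r, J r' = U r') (hW : ∀ r' < r, J r' = W r')
    (hKL : ∀ r' < r, K r' = L r') :
    RowsNonneg k J U W K L r :=
  ⟨leadingNonneg_vRow_of_lexLt h01 hr hD1 hU hKL,
    leadingNonneg_vRow_of_lexLt h12 hr hD2 (fun r' h => (hW r' h).symm)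
      fun r' h => (hKL r' h).symm⟩

lemma eq_of_rowsNonneg {t k r : ℕ} {J U W K L : ℕ → ℕ} (hK : validJs t k K) (hL : validJs t k L)
    (hr : r < t) (hU : ∀ r' ≤ r, J r' = U r') (hW : ∀ r' ≤ r, J r' = W r')
    (hKL : ∀ r' < r, K r' = L r') (h : RowsNonneg k J U W K L r) :
    K r = L r := by
  obtain ⟨h₁, h₂⟩ := h
  have hL' : vRow k L r = Pi.single (L r) ((prefixValue k K r : ℤ) + 1) := by
    rw [vRow, prefixValue_congr hKL]
  rw [← vRow_congr hU, hL'] at h₁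
  rw [← vRow_congr hW, hL'] at h₂
  refine eq_of_leadingNonneg_single_sub (c := (prefixValue k K r : ℤ) + 1) (hK r hr) (hL r hr)
    (by positivity) ?_ ?_
  · convert h₁ using 1; unfold vRow; abel
  · convert h₂ using 1; unfold vRow; abel

lemma not_rowsNonneg {t k p q m : ℕ} {J U W K L : ℕ → ℕ} (hJ : validJs t k J)
    (hK : validJs t k K) (hL : validJs t k L) (hqt : q < t) (hqp : q ≤ p) (hmp : m ≤ p)
    (hJU : ∀ r < p, J r = U r) (hJUp : J p < U p) (hJW : ∀ r < q, J r = W r) (hJWq : J q < W q)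
    (hJL : ∀ r < m, J r = L r) (hJLm : J m < L m) (hKL : ∀ r < q, K r = L r) :
    ¬ RowsNonneg k J U W K L q := by
  rintro ⟨h₁, h₂⟩
  have hU : prefixValue k U q = prefixValue k J q :=
    prefixValue_congr fun r hr => (hJU r (by omega)).symm
  have hW : prefixValue k W q = prefixValue k J q := prefixValue_congr fun r hr => (hJW r hr).symm
  have hK' : prefixValue k K q = prefixValue k L q := prefixValue_congr hKL
  rw [vRow, vRow, vRow, vRow, hU, hK'] at h₁
  rw [vRow, vRow, vRow, vRow, hW, hK'] at h₂
  have hlt : m < q → prefixValue k J q < prefixValue k L q := fun hmq =>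
    prefixValue_lt_of_firstDiff hJ hqt.le hmq hJL hJLm
  have hle : prefixValue k J q ≤ prefixValue k L q := by
    rcases Nat.lt_or_ge m q with hmq | hqm
    · exact (hlt hmq).le
    · exact (prefixValue_congr fun r hr => hJL r (by omega)).le
  have hju : J q ≤ U q := by
    rcases hqp.lt_or_eq with h | rfl
    · exact (hJU q h).le
    · exact hJUp.le
  refine false_of_leadingNonneg_rows (hJ q hqt) (hL q hqt) (hK q hqt).1 (by positivity)
    (by omega) hJWq hju (fun hlj hju' => ?_) h₁ h₂
  have hpq : p = q := by
    by_contra hne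
    exact hju'.ne (hJU q (by omega))
  have hmq : m < q := lt_of_le_of_ne (hpq ▸ hmp) fun h => hJLm.ne (h ▸ hlj.symm)
  exact_mod_cast Nat.add_lt_add_right (hlt hmq) 1

end AtMatrix

open AtMatrix

theorem stmt7_general (t k : ℕ) (a b c₀ c₁ c₂ d : Fin (t * k) → ℕ)
    (hab : lexLt a b) (h01 : lexLt c₀ c₁) (h12 : lexLt c₁ c₂) (h2d : lexLt c₂ d)
    (e0 : AtOne t k a c₀) (e1 : AtOne t k b c₁) (e2 : AtOne t k a c₂)
    (e3 : AtOne t k b d) (e4 : AtOne t k a d)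
    (hty : typeOf t k a b ≤ typeOf t k c₀ d) :
    typeOf t k c₀ d < typeOf t k c₂ d := by
  obtain ⟨J, hJ, hdJ⟩ := e4
  obtain ⟨U, hU, hdU⟩ := e0
  obtain ⟨W, hW, hdW⟩ := e2
  obtain ⟨L, hL, hdL⟩ := e3
  obtain ⟨K, hK, hdK⟩ := e1
  have h0d : lexLt c₀ d := (lt_trans h01 (lt_trans h12 h2d) : toLex c₀ < toLex d)
  obtain ⟨p, -, hJU, hJUp, htyp⟩ :=
    exists_firstDiff_of_lexLt hJ hU h0d fun i => by linarith [hdJ i, hdU i]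
  obtain ⟨q, hqt, hJW, hJWq, htyq⟩ :=
    exists_firstDiff_of_lexLt hJ hW h2d fun i => by linarith [hdJ i, hdW i]
  obtain ⟨m, -, hJL, hJLm, htym⟩ :=
    exists_firstDiff_of_lexLt hJ hL hab fun i => by linarith [hdJ i, hdL i]
  rw [htyp, htym] at hty
  rw [htyp, htyq]
  by_contra! hqp
  have rows : ∀ r ≤ q, (∀ r' < r, K r' = L r') → RowsNonneg k J U W K L r := fun r hr hKL =>
    rowsNonneg_of_lexLt h01 h12 (fun i => by linarith [hdJ i, hdU i, hdK i, hdL i])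
      (fun i => by linarith [hdJ i, hdW i, hdK i, hdL i]) (by omega)
      (fun r' h => hJU r' (by omega)) (fun r' h => hJW r' (by omega)) hKL
  have hKL : ∀ r < q, K r = L r := fun r =>
    Nat.strong_induction_on r fun r ih hr =>
      eq_of_rowsNonneg hK hL (by omega) (fun r' h => hJU r' (by omega))
        (fun r' h => hJW r' (by omega)) (fun r' h => ih r' h (by omega))
        (rows r hr.le fun r' h => ih r' h (by omega))
  exact not_rowsNonneg hJ hK hL hqt (by omega) (by omega) hJU hJUp hJW hJWq hJL hJLm hKL
    (rows q le_rfl hKL)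

/-- If `a < b`, `c₀ < c₁ < c₂ < d`,
`A_t(a,c₀) = A_t(b,c₁) = A_t(a,c₂) = A_t(b,d) = A_t(a,d) = 1`, and
`type(a,b) ≤ type(c₀,d)`, then `type(c₀,d) < type(c₂,d)`. -/
theorem stmt7 (t k : ℕ) (ht : 2 ≤ t) (hk : 2 ≤ k)
    (a b c₀ c₁ c₂ d : Fin (t * k) → ℕ)
    (ha : memI t k a) (hb : memI t k b)
    (hc₀ : memI t k c₀) (hc₁ : memI t k c₁) (hc₂ : memI t k c₂) (hd : memI t k d)
    (hab : lexLt a b) (h01 : lexLt c₀ c₁) (h12 : lexLt c₁ c₂) (h2d : lexLt c₂ d)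
    (e0 : AtOne t k a c₀) (e1 : AtOne t k b c₁) (e2 : AtOne t k a c₂)
    (e3 : AtOne t k b d) (e4 : AtOne t k a d)
    (hty : typeOf t k a b ≤ typeOf t k c₀ d) :
    typeOf t k c₀ d < typeOf t k c₂ d :=
  stmt7_general t k a b c₀ c₁ c₂ d hab h01 h12 h2d e0 e1 e2 e3 e4 hty
end

section
/- Suppose a < b in I and d_1 < d_2 < ⋯ < d_{2t} in I (lexicographic order) satisfy A_t(a, d_{2i−1}) = 1 for all i ∈ [t], A_t(b, d_{2i}) = 1 for all i ∈ [t−1], and A_t(a, d_{2t}) = A_t(b, d_{2t}) = 1 (an occurrence of the pattern P_t in A_t with rows a, b and columns d_1, …, d_{2t}). If type(a,b) ≤ type(d_1, d_{2t}), then type(a,b) = type(d_1, d_{2t}) = 1. -/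
/-!
Write `L = d_{2t}`, so that `L = a + v[j₁] = b + v[j₂]`, and `τᵢ = type(d_{2i-1}, L)`. A column
`Z < L` with `A_t(a, Z) = 1` is `a + v[W]`, where `W` first leaves `j₁` (upwards) at block
`type(Z, L)`; likewise for the columns of row `b`. Because the tuples agreeing with `L` on an
initial segment form a lexicographic interval, `type(·, L)` is monotone along `d_1 < ⋯ < d_{2t}`.
If `type(a, b) ≤ τᵢ = τᵢ₊₁`, then `d_{2i-1}`, `d_{2i}`, `d_{2i+1}` all leave `L` in the same block,
and at the first position of that block where `v[j₁]` or `v[j₂]` is nonzero the middle one differs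
from the outer two, which agree there: it cannot lie between them. So `τ` strictly increases, and
`τ₁ + t - 1 ≤ τ_t ≤ t` forces `τ₁ = 1`.
-/

section Lex

variable {N : ℕ} {X Y Z : Fin N → ℕ}

lemma lexLt_irrefl : ¬ lexLt X X :=
  fun ⟨_, _, h⟩ => lt_irrefl _ h

lemma lexLt_iff_of_eq_of_ne {i : Fin N} (hbelow : ∀ j < i, X j = Y j) (hi : X i ≠ Y i) :
    lexLt X Y ↔ X i < Y i := by
  refine ⟨fun ⟨j, hj, hlt⟩ => ?_, fun h => ⟨i, hbelow, h⟩⟩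
  rcases lt_trichotomy j i with h | rfl | h
  · exact absurd (hbelow j h) hlt.ne
  · exact hlt
  · exact absurd (hj i h) hi

lemma eq_of_lexLt_of_lexLt {m : ℕ} (hXY : lexLt X Y) (hYZ : lexLt Y Z)
    (hXZ : ∀ j : Fin N, j.val < m → X j = Z j) : ∀ j : Fin N, j.val < m → Y j = Z j := by
  obtain ⟨e, he, hXYe⟩ := hXY
  obtain ⟨f, hf, hYZf⟩ := hYZ
  intro j hj
  by_contra hne
  have hfj : f ≤ j := not_lt.1 fun h => hne (hf j h)
  have hXf : X f = Z f := hXZ f (by omega)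
  rcases lt_trichotomy e f with h | rfl | h
  · have := hf e h
    have := hXZ e (by omega)
    omega
  · omega
  · have := he f h
    omega

end Lex

section TypeOf

variable {t k : ℕ} {X Y Z : Fin (t * k) → ℕ}

lemma typeOf_le_of_ne {i : Fin (t * k)} (h : X i ≠ Y i) : typeOf t k X Y ≤ i.val / k + 1 :=
  Nat.sInf_le ⟨i, rfl, h⟩

lemma le_typeOf {i : Fin (t * k)} (h : X i ≠ Y i) {e : ℕ}
    (hagree : ∀ j : Fin (t * k), j.val / k < e → X j = Y j) : e + 1 ≤ typeOf t k X Y :=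
  le_csInf ⟨_, i, rfl, h⟩ fun _ ⟨j, hj, hne⟩ => by
    have := mt (hagree j) hne
    omega

lemma eq_of_lt_typeOf {j : Fin (t * k)} (h : j.val / k + 1 < typeOf t k X Y) : X j = Y j :=
  not_not.1 fun hne => (typeOf_le_of_ne hne).not_gt h

lemma one_le_typeOf {i : Fin (t * k)} (h : X i ≠ Y i) : 1 ≤ typeOf t k X Y :=
  le_typeOf (e := 0) h fun _ hj => absurd hj (Nat.not_lt_zero _)

lemma typeOf_le {i : Fin (t * k)} (h : X i ≠ Y i) : typeOf t k X Y ≤ t :=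
  (typeOf_le_of_ne h).trans (Nat.div_lt_of_lt_mul (by simp [mul_comm]))

lemma typeOf_le_typeOf (hXY : lexLt X Y) (hYZ : lexLt Y Z) :
    typeOf t k X Z ≤ typeOf t k Y Z := by
  obtain ⟨i, -, hi⟩ := id hYZ
  have hk : 0 < k := Nat.pos_of_mul_pos_left i.pos
  have hXZ : ∀ j : Fin (t * k), j.val < (typeOf t k X Z - 1) * k → X j = Z j := fun j hj =>
    eq_of_lt_typeOf (X := X) (Y := Z) (Nat.add_lt_of_lt_sub ((Nat.div_lt_iff_lt_mul hk).2 hj))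
  have hYZ' := eq_of_lexLt_of_lexLt hXY hYZ hXZ
  have := le_typeOf hi.ne fun j hj => hYZ' j ((Nat.div_lt_iff_lt_mul hk).1 hj)
  omega

end TypeOf

section Coding

variable {k : ℕ}

lemma one_le_ang (l : List ℕ) : 1 ≤ ang k l :=
  Nat.le_add_left 1 _

lemma ang_range_succ (x : ℕ → ℕ) (e : ℕ) :
    ang k ((List.range (e + 1)).map x) - 1 =
      (x e - 1) + k * (ang k ((List.range e).map x) - 1) := by
  simp [ang, List.range_succ, List.foldl_append, mul_comm, add_comm]

lemma eq_of_ang_eq {x y : ℕ → ℕ} :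
    ∀ {e : ℕ}, (∀ r < e, 1 ≤ x r ∧ x r ≤ k) → (∀ r < e, 1 ≤ y r ∧ y r ≤ k) →
      ang k ((List.range e).map x) = ang k ((List.range e).map y) → ∀ r < e, x r = y r
  | 0, _, _, _ => fun _ hr => absurd hr (Nat.not_lt_zero _)
  | e + 1, hx, hy, h => by
    have hxe := hx e (Nat.lt_succ_self e)
    have hye := hy e (Nat.lt_succ_self e)
    have hk : 0 < k := by omega
    have h' := congrArg (· - 1) h
    simp only [ang_range_succ] at h'
    set A := ang k ((List.range e).map x) - 1
    set B := ang k ((List.range e).map y) - 1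
    obtain ⟨hdiv, hmod⟩ := (Nat.div_mod_unique hk).2 ⟨h', (by omega : x e - 1 < k)⟩
    obtain ⟨hdiv', hmod'⟩ : (y e - 1 + k * B) / k = B ∧ (y e - 1 + k * B) % k = y e - 1 :=
      (Nat.div_mod_unique hk).2 ⟨rfl, by omega⟩
    have hpre := eq_of_ang_eq (e := e) (fun r hr => hx r (by omega)) (fun r hr => hy r (by omega))
      (by have := one_le_ang (k := k) ((List.range e).map x)
          have := one_le_ang (k := k) ((List.range e).map y)
          omega)
    intro r hr
    rcases Nat.lt_succ_iff_lt_or_eq.1 hr with hr | rfl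
    · exact hpre r hr
    · omega

end Coding

section Vectors

variable {k : ℕ}

lemma mul_add_div_of_lt {e ρ : ℕ} (hρ : ρ < k) : (e * k + ρ) / k = e := by
  rw [add_comm, Nat.add_mul_div_right _ _ (by omega), Nat.div_eq_of_lt hρ, zero_add]

lemma mul_add_lt_mul {t e ρ : ℕ} (he : e < t) (hρ : ρ < k) : e * k + ρ < t * k :=
  calc e * k + ρ < (e + 1) * k := by rw [add_mul, one_mul]; omega
    _ ≤ t * k := Nat.mul_le_mul_right k he

lemma vVec_block (js : ℕ → ℕ) (e : ℕ) {ρ : ℕ} (hρ : ρ < k) :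
    vVec k js (e * k + ρ) =
      if ρ + 1 = js e then (ang k ((List.range e).map js) : ℤ) else 0 := by
  rw [vVec, mul_add_div_of_lt hρ, Nat.mul_add_mod_of_lt hρ]

lemma vVec_entry (js : ℕ → ℕ) (e : ℕ) (h1 : 1 ≤ js e) (hk : js e ≤ k) :
    vVec k js (e * k + (js e - 1)) = ang k ((List.range e).map js) := by
  rw [vVec_block js e (by omega), if_pos (by omega)]

lemma vVec_congr_s8 {x y : ℕ → ℕ} (n : ℕ) (h : ∀ r ≤ n / k, x r = y r) :
    vVec k x n = vVec k y n := by
  have hpre : (List.range (n / k)).map x = (List.range (n / k)).map y :=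
    List.map_congr_left fun r hr => h r (List.mem_range.1 hr).le
  rw [vVec, vVec, h _ le_rfl, hpre]

lemma vVec_eq_of_lt_mul {x y : ℕ → ℕ} {e n : ℕ} (hag : ∀ r < e, x r = y r) (hn : n < e * k) :
    vVec k x n = vVec k y n :=
  vVec_congr_s8 n fun r hr => hag r (hr.trans_lt (Nat.div_lt_of_lt_mul (by rwa [mul_comm])))

lemma vVec_eq_of_lt {x y : ℕ → ℕ} {e ρ n : ℕ} (hag : ∀ r < e, x r = y r) (hρ : ρ < k)
    (hx : ρ < x e) (hy : ρ < y e) (hn : n < e * k + ρ) : vVec k x n = vVec k y n := by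
  rcases lt_or_ge n (e * k) with h | h
  · exact vVec_eq_of_lt_mul hag h
  · obtain ⟨σ, rfl⟩ := Nat.exists_eq_add_of_le h
    rw [vVec_block x e (by omega), vVec_block y e (by omega), if_neg (by omega), if_neg (by omega)]

/-- The position is the first one of block `e` where `v[x]` or `v[y]` is nonzero; if `x e = y e`,
the values there are the codes of two different prefixes. -/
lemma vVec_ne_of_ne {t : ℕ} {x y : ℕ → ℕ} {e : ℕ} (hx : validJs t k x) (hy : validJs t k y)
    (he : e < t) (hdiff : ∃ r ≤ e, x r ≠ y r) :
    vVec k x (e * k + (min (x e) (y e) - 1)) ≠ vVec k y (e * k + (min (x e) (y e) - 1)) := by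
  obtain ⟨hx1, hxk⟩ := hx e he
  obtain ⟨hy1, hyk⟩ := hy e he
  rw [vVec_block x e (by omega), vVec_block y e (by omega)]
  have hx0 := one_le_ang (k := k) ((List.range e).map x)
  have hy0 := one_le_ang (k := k) ((List.range e).map y)
  rcases lt_trichotomy (x e) (y e) with h | h | h
  · rw [if_pos (by omega), if_neg (by omega)]
    omega
  · obtain ⟨r, hre, hr⟩ := hdiff
    have hpre : ang k ((List.range e).map x) ≠ ang k ((List.range e).map y) := fun hang =>
      hr (eq_of_ang_eq (fun r' hr' => hx r' (by omega)) (fun r' hr' => hy r' (by omega)) hang r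
        (lt_of_le_of_ne hre fun hre => hr (hre ▸ h)))
    rw [if_pos (by omega), if_pos (by omega)]
    exact_mod_cast hpre
  · rw [if_neg (by omega), if_pos (by omega)]
    omega

end Vectors

section Translates

variable {t k : ℕ}

lemma exists_typeOf_eq_of_lexLt {base : Fin (t * k) → ℤ} {X L : Fin (t * k) → ℕ} {w z : ℕ → ℕ}
    (hw : validJs t k w) (hX : ∀ i, (X i : ℤ) - base i = vVec k w i)
    (hL : ∀ i, (L i : ℤ) - base i = vVec k z i) (hXL : lexLt X L) :
    ∃ e < t, (∀ r < e, w r = z r) ∧ z e < w e ∧ typeOf t k X L = e + 1 := by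
  classical
  have hex : ∃ e, e < t ∧ w e ≠ z e := by
    by_contra! hwz
    have hXL' : X = L := funext fun i => by
      have hi : i.val / k < t := Nat.div_lt_of_lt_mul (by simp [mul_comm])
      have := vVec_congr_s8 (k := k) i.val fun r hr => hwz r (by omega)
      have := hX i
      have := hL i
      omega
    exact lexLt_irrefl (hXL' ▸ hXL)
  obtain ⟨he, hne⟩ := Nat.find_spec hex
  set e := Nat.find hex
  have hag : ∀ r < e, w r = z r := fun r hr => not_not.1 fun h => Nat.find_min hex hr ⟨by omega, h⟩
  obtain ⟨hw1, hwk⟩ := hw e he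
  have hbelow : ∀ j : Fin (t * k), j.val / k < e → X j = L j := fun j hj => by
    have := vVec_congr_s8 (k := k) j.val fun r hr => hag r (by omega)
    have := hX j
    have := hL j
    omega
  let i₀ : Fin (t * k) := ⟨e * k + (w e - 1), mul_add_lt_mul he (by omega)⟩
  have hi₀ : (L i₀ : ℤ) + ang k ((List.range e).map w) = X i₀ := by
    have hXi₀ := hX i₀
    have hLi₀ := hL i₀
    simp only [i₀, vVec_entry w e hw1 hwk, vVec_block z e (show w e - 1 < k by omega),
      if_neg (show w e - 1 + 1 ≠ z e by omega)] at hXi₀ hLi₀ ⊢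
    omega
  have hang := one_le_ang (k := k) ((List.range e).map w)
  refine ⟨e, he, hag, ?_, ?_⟩
  · by_contra! hle
    have hlt : ¬ X i₀ < L i₀ := by omega
    refine hlt ((lexLt_iff_of_eq_of_ne (fun j hj => ?_) (by omega)).1 hXL)
    have := vVec_eq_of_lt (k := k) hag (show w e - 1 < k by omega) (by omega)
      (show w e - 1 < z e by omega) (show j.val < e * k + (w e - 1) from hj)
    have := hX j
    have := hL j
    omega
  · have hdiv : i₀.val / k = e := mul_add_div_of_lt (by omega)
    exact le_antisymm (hdiv ▸ typeOf_le_of_ne (i := i₀) (by omega))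
      (le_typeOf (i := i₀) (by omega) hbelow)

end Translates

/-- `Z`, `Y` and `Z'` agree before position `e * k + min (j₁ e) (j₂ e) - 1`, where `Z` and `Z'`
still equal `a` but `Y` does not, so `Y` lies on the same side of both. -/
lemma not_lexLt_of_lexLt_of_firstDiff {t k e : ℕ} {a : Fin (t * k) → ℤ}
    {Z Y Z' : Fin (t * k) → ℕ} {W W' U j₁ j₂ : ℕ → ℕ}
    (hj₁ : validJs t k j₁) (hj₂ : validJs t k j₂) (he : e < t) (hdiff : ∃ r ≤ e, j₁ r ≠ j₂ r)
    (hZ : ∀ i, (Z i : ℤ) - a i = vVec k W i) (hZ' : ∀ i, (Z' i : ℤ) - a i = vVec k W' i)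
    (hY : ∀ i, (Y i : ℤ) - a i = vVec k j₁ i - vVec k j₂ i + vVec k U i)
    (hW : ∀ r < e, W r = j₁ r) (hWe : j₁ e < W e) (hW' : ∀ r < e, W' r = j₁ r)
    (hW'e : j₁ e < W' e) (hU : ∀ r < e, U r = j₂ r) (hUe : j₂ e < U e)
    (hZY : lexLt Z Y) : ¬ lexLt Y Z' := by
  obtain ⟨h₁, h₁k⟩ := hj₁ e he
  obtain ⟨h₂, h₂k⟩ := hj₂ e he
  set ρ := min (j₁ e) (j₂ e) - 1
  have hρ : ρ < k := by omega
  let i₀ : Fin (t * k) := ⟨e * k + ρ, mul_add_lt_mul he hρ⟩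
  have hUi₀ : vVec k U i₀ = 0 := by
    rw [show (i₀ : ℕ) = e * k + ρ from rfl, vVec_block U e hρ, if_neg (by omega)]
  have hY₀ : (Y i₀ : ℤ) ≠ a i₀ := by
    have : vVec k j₁ i₀ ≠ vVec k j₂ i₀ := vVec_ne_of_ne hj₁ hj₂ he hdiff
    have := hY i₀
    rw [hUi₀] at this
    omega
  have hcol : ∀ (V : Fin (t * k) → ℕ) (W'' : ℕ → ℕ), (∀ i, (V i : ℤ) - a i = vVec k W'' i) →
      (∀ r < e, W'' r = j₁ r) → j₁ e < W'' e →
      (∀ j < i₀, V j = Y j) ∧ (V i₀ : ℤ) = a i₀ := by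
    intro V W'' hV hW'' hW''e
    refine ⟨fun j hj => ?_, ?_⟩
    · have hj : j.val < e * k + ρ := hj
      have := vVec_eq_of_lt hW'' hρ (by omega) (by omega) hj
      have := vVec_eq_of_lt hU hρ (by omega) (by omega) hj
      have := hV j
      have := hY j
      omega
    · have := hV i₀
      rw [show (i₀ : ℕ) = e * k + ρ from rfl, vVec_block W'' e hρ, if_neg (by omega)] at this
      omega
  obtain ⟨hZb, hZ₀⟩ := hcol Z W hZ hW hWe
  obtain ⟨hZ'b, hZ'₀⟩ := hcol Z' W' hZ' hW' hW'e
  have hZY₀ := (lexLt_iff_of_eq_of_ne hZb (by omega)).1 hZY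
  rw [lexLt_iff_of_eq_of_ne (fun j hj => (hZ'b j hj).symm) (by omega)]
  omega

lemma typeOf_lt_typeOf_of_lexLt {t k : ℕ} {a b Z Y Z' L : Fin (t * k) → ℕ} (hab : lexLt a b)
    (hZY : lexLt Z Y) (hYZ' : lexLt Y Z') (hZL : lexLt Z L) (hYL : lexLt Y L) (hZ'L : lexLt Z' L)
    (haZ : AtOne t k a Z) (hbY : AtOne t k b Y) (haZ' : AtOne t k a Z') (haL : AtOne t k a L)
    (hbL : AtOne t k b L) (hty : typeOf t k a b ≤ typeOf t k Z L) :
    typeOf t k Z L < typeOf t k Z' L := by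
  obtain ⟨j₁, hj₁, hL₁⟩ := haL
  obtain ⟨j₂, hj₂, hL₂⟩ := hbL
  obtain ⟨W, hWv, hZ⟩ := haZ
  obtain ⟨U, hUv, hY⟩ := hbY
  obtain ⟨W', hW'v, hZ'⟩ := haZ'
  obtain ⟨s, -, -, hs, hts⟩ := exists_typeOf_eq_of_lexLt
    (base := fun i => L i - vVec k j₁ i - vVec k j₂ i) (z := j₁) hj₂
    (fun i => by linarith [hL₁ i]) (fun i => by linarith [hL₂ i]) hab
  obtain ⟨e, he, hW, hWe, hτ⟩ := exists_typeOf_eq_of_lexLt hWv hZ hL₁ hZL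
  obtain ⟨f, -, hU, hUf, hσ⟩ := exists_typeOf_eq_of_lexLt hUv hY hL₂ hYL
  obtain ⟨g, -, hW', hW'g, hτ'⟩ := exists_typeOf_eq_of_lexLt hW'v hZ' hL₁ hZ'L
  by_contra! hle
  have := typeOf_le_typeOf hZY hYL
  have := typeOf_le_typeOf hYZ' hZ'L
  obtain rfl : f = e := by omega
  obtain rfl : g = f := by omega
  exact not_lexLt_of_lexLt_of_firstDiff hj₁ hj₂ he ⟨s, by omega, hs.ne⟩ hZ hZ'
    (fun i => by linarith [hY i, hL₁ i, hL₂ i]) hW hWe hW' hW'g hU hUf hZY hYZ'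

/-- Columns are 0-indexed: `d ⟨2 * i, _⟩` is the paper's `d_{2i+1}`. -/
theorem stmt8 (t k : ℕ) (ht : 2 ≤ t)
    (a b : Fin (t * k) → ℕ) (d : Fin (2 * t) → Fin (t * k) → ℕ)
    (hab : lexLt a b)
    (hmono : ∀ i j : Fin (2 * t), i < j → lexLt (d i) (d j))
    (h1 : ∀ i : ℕ, ∀ h : i < t, AtOne t k a (d ⟨2 * i, by omega⟩))
    (h2 : ∀ i : ℕ, ∀ h : i < t - 1, AtOne t k b (d ⟨2 * i + 1, by omega⟩))
    (h3 : AtOne t k a (d ⟨2 * t - 1, by omega⟩))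
    (h4 : AtOne t k b (d ⟨2 * t - 1, by omega⟩))
    (hty : typeOf t k a b ≤ typeOf t k (d ⟨0, by omega⟩) (d ⟨2 * t - 1, by omega⟩)) :
    typeOf t k a b = 1 ∧ typeOf t k (d ⟨0, by omega⟩) (d ⟨2 * t - 1, by omega⟩) = 1 := by
  have hlt : ∀ {m n : ℕ} (hm : m < 2 * t) (hn : n < 2 * t), m < n → lexLt (d ⟨m, hm⟩) (d ⟨n, hn⟩) :=
    fun _ _ h => hmono _ _ h
  have hchain : ∀ i (hi : i < t),
      typeOf t k (d ⟨0, by omega⟩) (d ⟨2 * t - 1, by omega⟩) + i ≤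
        typeOf t k (d ⟨2 * i, by omega⟩) (d ⟨2 * t - 1, by omega⟩) := by
    intro i
    induction i with
    | zero => exact fun _ => le_rfl
    | succ i ih =>
      intro hi
      have := typeOf_lt_typeOf_of_lexLt hab (hlt _ _ (by omega)) (hlt _ _ (by omega))
        (hlt _ _ (by omega)) (hlt _ _ (by omega)) (hlt _ _ (by omega)) (h1 i (by omega))
        (h2 i (by omega)) (h1 (i + 1) hi) h3 h4 (by have := ih (by omega); omega)
      have := ih (by omega)
      omega
  obtain ⟨i, -, hi⟩ := hab
  obtain ⟨j, -, hj⟩ :=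
    hlt (m := 2 * (t - 1)) (by omega) (by omega) (by omega : 2 * (t - 1) < 2 * t - 1)
  have := one_le_typeOf hi.ne
  have := typeOf_le hj.ne
  have := hchain (t - 1) (by omega)
  omega
end

section
/- Let P ∈ {0,1}^{k×l} be a 0–1 pattern with rows i_0, i_1 and a column j with 1 < j < l such that P(i_0, j) = 1 is the only 1-entry in column j, and P(i_0, j+1) = P(i_1, j−1) = P(i_1, j+1) = 1. Let P' ∈ {0,1}^{k×(l−1)} be P with column j removed. Then there is a constant C (depending only on P) such that Ex(P, n) ≤ C · Ex(P', n) · log n for all n ≥ 2. -/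
/-- `A` contains the pattern `P`: there are strictly increasing row and column maps
carrying the 1-entries of `P` to 1-entries of `A`. -/
def PatContains {k l m n : ℕ} (P : Fin k → Fin l → Prop) (A : Fin m → Fin n → Bool) : Prop :=
  ∃ (r : Fin k → Fin m) (c : Fin l → Fin n),
    StrictMono r ∧ StrictMono c ∧ ∀ i j, P i j → A (r i) (c j) = true

/-- The number of 1-entries (weight) of a 0–1 matrix. -/
def wt {m n : ℕ} (A : Fin m → Fin n → Bool) : ℕ :=
  (Finset.univ.filter (fun p : Fin m × Fin n => A p.1 p.2 = true)).card

/-- `matEx P n` is the maximum weight of an `n × n` 0–1 matrix avoiding the pattern `P`. -/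
noncomputable def matEx {k l : ℕ} (P : Fin k → Fin l → Prop) (n : ℕ) : ℕ :=
  sSup {w | ∃ A : Fin n → Fin n → Bool, ¬ PatContains P A ∧ wt A = w}


/-!
Take a `P`-avoiding `n × n` matrix `A`. Apart from the first 1 of each row (at most `n` of
them), every 1-entry `(a, b)` has a previous 1 `(a, b')` in its row, and the pair `b' < b`
separates at a unique dyadic level `t < log₂ n + 1`: the two columns lie in one block of size
`2^(t+1)` but in different halves of it. The 1-entries of level `t` form a matrix `Aₜ` that avoids
`P'`: in a copy of `P'` in `Aₜ`, row `i₁` puts columns `j - 1` and `j + 1` of `P` into different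
blocks of size `2^(t+1)`, so the previous 1 in row `i₀` before the image of column `j + 1` lies
strictly between the two and restores column `j`, giving a copy of `P` in `A`. Summing over the
levels, `Ex(P, n) ≤ n + (log₂ n + 1) Ex(P', n)`, and `n ≤ Ex(P', n)` since `P'` has two 1s in a row.
-/

namespace PatternAvoidance

variable {k l n : ℕ}

lemma wt_le_mul {m : ℕ} (A : Fin m → Fin n → Bool) : wt A ≤ m * n :=
  (Finset.card_filter_le _ _).trans_eq (by simp)

lemma bddAbove_weights (P : Fin k → Fin l → Prop) :
    BddAbove {w | ∃ A : Fin n → Fin n → Bool, ¬ PatContains P A ∧ wt A = w} :=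
  ⟨n * n, fun _ ⟨A, _, hw⟩ => hw ▸ wt_le_mul A⟩

lemma wt_le_matEx (P : Fin k → Fin l → Prop) {A : Fin n → Fin n → Bool}
    (hA : ¬ PatContains P A) : wt A ≤ matEx P n :=
  le_csSup (bddAbove_weights P) ⟨A, hA, rfl⟩

lemma matEx_le_of_forall {P : Fin k → Fin l → Prop} {w : ℕ}
    (h : ∀ A : Fin n → Fin n → Bool, ¬ PatContains P A → wt A ≤ w) : matEx P n ≤ w :=
  csSup_le' fun _ ⟨A, hA, hw⟩ => hw ▸ h A hA

/-- The first column, filled with 1s, avoids every pattern with two 1s in a row. -/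
lemma le_matEx_of_lt {P : Fin k → Fin l → Prop} {i : Fin k} {c₁ c₂ : Fin l} (hc : c₁ < c₂)
    (h₁ : P i c₁) (h₂ : P i c₂) : n ≤ matEx P n := by
  rcases Nat.eq_zero_or_pos n with rfl | hn
  · exact Nat.zero_le _
  let A : Fin n → Fin n → Bool := fun _ b => decide (b.val = 0)
  have hA : ¬ PatContains P A := by
    rintro ⟨r, c, -, hcm, hPA⟩
    have e₁ := hPA i c₁ h₁
    have e₂ := hPA i c₂ h₂
    have := Fin.lt_def.mp (hcm hc)
    simp only [A, decide_eq_true_eq] at e₁ e₂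
    omega
  have hwt : n ≤ wt A := by
    have := Finset.card_le_card_of_injOn (s := Finset.univ)
      (t := Finset.univ.filter fun p : Fin n × Fin n => A p.1 p.2 = true)
      (fun a => (a, ⟨0, hn⟩)) (fun a _ => by simp [A]) (fun a _ b _ hab => congrArg Prod.fst hab)
    simpa [wt] using this
  exact hwt.trans (wt_le_matEx P hA)

/-- `x` and `y` lie in one dyadic block of size `2^(t+1)`, but in different halves of it. -/
def SplitsAt (t x y : ℕ) : Prop :=
  x / 2 ^ (t + 1) = y / 2 ^ (t + 1) ∧ x / 2 ^ t ≠ y / 2 ^ t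

lemma exists_splitsAt {x y T : ℕ} (hxy : x < y) (hy : y < 2 ^ T) : ∃ t < T, SplitsAt t x y := by
  have hT : x / 2 ^ T = y / 2 ^ T := by
    rw [Nat.div_eq_of_lt hy, Nat.div_eq_of_lt (hxy.trans hy)]
  have hex : ∃ s, x / 2 ^ s = y / 2 ^ s := ⟨T, hT⟩
  classical
  have hs0 : Nat.find hex ≠ 0 := fun h => by
    have := Nat.find_spec hex
    rw [h, pow_zero, Nat.div_one, Nat.div_one] at this
    omega
  obtain ⟨t, ht⟩ := Nat.exists_eq_add_one_of_ne_zero hs0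
  refine ⟨t, by have := Nat.find_min' hex hT; omega, ?_, Nat.find_min hex (by omega)⟩
  rw [← ht]
  exact Nat.find_spec hex

def IsPrevOne (s : Fin n → Bool) (b' b : Fin n) : Prop :=
  b' < b ∧ s b' = true ∧ ∀ c, b' < c → c < b → s c = false

lemma exists_isPrevOne {s : Fin n → Bool} {b₀ b : Fin n} (hb₀ : b₀ < b) (h₀ : s b₀ = true) :
    ∃ b', IsPrevOne s b' b := by
  classical
  let F := Finset.univ.filter fun c => c < b ∧ s c = true
  have hF : F.Nonempty := ⟨b₀, by simp [F, hb₀, h₀]⟩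
  have hmem : F.max' hF ∈ F := F.max'_mem hF
  simp only [F, Finset.mem_filter, Finset.mem_univ, true_and] at hmem
  refine ⟨F.max' hF, hmem.1, hmem.2, fun c hc hcb => ?_⟩
  by_contra h
  exact (F.le_max' c (by simp [F, hcb, h])).not_gt hc

open Classical in
noncomputable def levelMatrix (A : Fin n → Fin n → Bool) (t : ℕ) : Fin n → Fin n → Bool :=
  fun a b => decide (A a b = true ∧ ∃ b', IsPrevOne (A a) b' b ∧ SplitsAt t b' b)

lemma levelMatrix_eq_true_iff {A : Fin n → Fin n → Bool} {t : ℕ} {a b : Fin n} :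
    levelMatrix A t a b = true ↔ A a b = true ∧ ∃ b', IsPrevOne (A a) b' b ∧ SplitsAt t b' b := by
  simp [levelMatrix]

/-- Each 1 of `levelMatrix A t` sits in the right half of its block of size `2^(t+1)`, and its
previous 1 in the left half. -/
lemma levelMatrix_block_lt {A : Fin n → Fin n → Bool} {t : ℕ} {a b₁ b₂ : Fin n}
    (h₁ : levelMatrix A t a b₁ = true) (h₂ : levelMatrix A t a b₂ = true) (hlt : b₁ < b₂) :
    b₁.val / 2 ^ (t + 1) < b₂.val / 2 ^ (t + 1) := by
  obtain ⟨hA₁, b₁', ⟨hlt₁, -, -⟩, hsame₁, hdiff₁⟩ := levelMatrix_eq_true_iff.mp h₁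
  obtain ⟨-, b₂', ⟨hlt₂, -, hgap₂⟩, hsame₂, hdiff₂⟩ := levelMatrix_eq_true_iff.mp h₂
  have hle : b₁ ≤ b₂' := le_of_not_gt fun h => by simp [hgap₂ b₁ h hlt] at hA₁
  have d₁ := Nat.div_le_div_right (c := 2 ^ t) (Fin.le_def.mp hlt₁.le)
  have d₂ := Nat.div_le_div_right (c := 2 ^ t) (Fin.le_def.mp hlt₂.le)
  have d₃ := Nat.div_le_div_right (c := 2 ^ t) (Fin.le_def.mp hle)
  have d₄ := Nat.div_le_div_right (c := 2 ^ (t + 1)) (Fin.le_def.mp hlt.le)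
  simp only [pow_succ, ← Nat.div_div_eq_div_mul] at hsame₁ hsame₂ d₄ ⊢
  omega

lemma card_rowFirst_le (A : Fin n → Fin n → Bool) :
    (Finset.univ.filter fun p : Fin n × Fin n =>
      A p.1 p.2 = true ∧ ∀ b < p.2, A p.1 b = false).card ≤ n := by
  refine (Finset.card_le_card_of_injOn Prod.fst (t := Finset.univ) (fun _ _ => Finset.mem_univ _)
    ?_).trans_eq (Finset.card_fin n)
  rintro ⟨a, b₁⟩ h₁ ⟨a', b₂⟩ h₂ (rfl : a = a')
  simp only [Finset.mem_coe, Finset.mem_filter, Finset.mem_univ, true_and] at h₁ h₂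
  rcases lt_trichotomy b₁ b₂ with h | rfl | h
  · simp [h₂.2 b₁ h] at h₁
  · rfl
  · simp [h₁.2 b₂ h] at h₂

lemma wt_le_add_sum_wt_levelMatrix {T : ℕ} (hn : n ≤ 2 ^ T) (A : Fin n → Fin n → Bool) :
    wt A ≤ n + ∑ t ∈ Finset.range T, wt (levelMatrix A t) := by
  classical
  let First := Finset.univ.filter fun p : Fin n × Fin n =>
    A p.1 p.2 = true ∧ ∀ b < p.2, A p.1 b = false
  have hcover : Finset.univ.filter (fun p : Fin n × Fin n => A p.1 p.2 = true) ⊆ First ∪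
      (Finset.range T).biUnion fun t =>
        Finset.univ.filter fun p : Fin n × Fin n => levelMatrix A t p.1 p.2 = true := by
    rintro ⟨a, b⟩ hab
    simp only [Finset.mem_filter, Finset.mem_univ, true_and] at hab
    by_cases hfirst : ∀ b' < b, A a b' = false
    · exact Finset.mem_union_left _ (by simpa [First, hab] using hfirst)
    obtain ⟨b₀, hb₀, h₀⟩ : ∃ b₀ < b, A a b₀ = true := by simpa using hfirst
    obtain ⟨b', hb'⟩ := exists_isPrevOne hb₀ h₀
    obtain ⟨t, ht, hsplit⟩ := exists_splitsAt hb'.1 (b.isLt.trans_le hn)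
    refine Finset.mem_union_right _ (Finset.mem_biUnion.mpr ⟨t, Finset.mem_range.mpr ht, ?_⟩)
    simpa using levelMatrix_eq_true_iff.mpr ⟨hab, b', hb', hsplit⟩
  calc wt A ≤ (First ∪ _).card := Finset.card_le_card hcover
    _ ≤ First.card + ((Finset.range T).biUnion _).card := Finset.card_union_le _ _
    _ ≤ n + ∑ t ∈ Finset.range T, wt (levelMatrix A t) :=
        add_le_add (card_rowFirst_le A) Finset.card_biUnion_le

section DeleteColumn

/- The deleted column is `i.castSucc.succ`; its neighbours `i.castSucc.castSucc` and `i.succ.succ`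
become the adjacent columns `i.castSucc` and `i.succ` of the reduced pattern. -/
variable {m : ℕ} {P : Fin k → Fin (m + 2) → Prop} {i₀ i₁ : Fin k} {i : Fin m}

/-- The previous 1 of `A` before `c i.succ` in row `r i₀` lies in the block of `c i.succ`, hence
after `c i.castSucc`, and becomes the image of the deleted column. -/
lemma not_patContains_levelMatrix (hcol : ∀ r, P r i.castSucc.succ → r = i₀)
    (h₀ : P i₀ i.succ.succ) (h₁ : P i₁ i.castSucc.castSucc) (h₂ : P i₁ i.succ.succ)
    {A : Fin n → Fin n → Bool} (hA : ¬ PatContains P A) (t : ℕ) :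
    ¬ PatContains (fun r q => P r (i.castSucc.succ.succAbove q)) (levelMatrix A t) := by
  rintro ⟨r, c, hr, hc, hPA⟩
  have e₁ := hPA i₁ i.castSucc (by simpa using h₁)
  have e₂ := hPA i₁ i.succ (by simpa using h₂)
  obtain ⟨-, d, ⟨hd, hd₀, -⟩, hsplit, -⟩ :=
    levelMatrix_eq_true_iff.mp (hPA i₀ i.succ (by simpa using h₀))
  have hblock := levelMatrix_block_lt e₁ e₂ (hc Fin.castSucc_lt_succ)
  have hcd : c i.castSucc < d := lt_of_not_ge fun h => by
    have := Nat.div_le_div_right (c := 2 ^ (t + 1)) (Fin.le_def.mp h)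
    omega
  refine hA ⟨r, Fin.insertNth i.castSucc.succ d c, hr, Fin.strictMono_insertNth hc i d hcd hd,
    fun r' q hq => ?_⟩
  obtain rfl | ⟨q, rfl⟩ := Fin.eq_self_or_eq_succAbove i.castSucc.succ q
  · rw [hcol r' hq, Fin.insertNth_apply_same]
    exact hd₀
  · rw [Fin.insertNth_apply_succAbove]
    exact (levelMatrix_eq_true_iff.mp (hPA r' q hq)).1

theorem matEx_le_mul_matEx_succAbove (hcol : ∀ r, P r i.castSucc.succ → r = i₀)
    (h₀ : P i₀ i.succ.succ) (h₁ : P i₁ i.castSucc.castSucc) (h₂ : P i₁ i.succ.succ) (n : ℕ) :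
    matEx P n ≤ (Nat.log 2 n + 2) * matEx (fun r q => P r (i.castSucc.succ.succAbove q)) n := by
  set E' := matEx (fun r q => P r (i.castSucc.succ.succAbove q)) n
  have hnE' : n ≤ E' :=
    le_matEx_of_lt (i := i₁) (Fin.castSucc_lt_succ (i := i)) (by simpa using h₁) (by simpa using h₂)
  refine matEx_le_of_forall fun A hA => ?_
  calc wt A ≤ n + ∑ t ∈ Finset.range (Nat.log 2 n + 1), wt (levelMatrix A t) :=
        wt_le_add_sum_wt_levelMatrix (Nat.lt_pow_succ_log_self one_lt_two n).le A
    _ ≤ n + ∑ _t ∈ Finset.range (Nat.log 2 n + 1), E' := by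
        gcongr with t
        exact wt_le_matEx _ (not_patContains_levelMatrix hcol h₀ h₁ h₂ hA t)
    _ ≤ (Nat.log 2 n + 2) * E' := by
        simp only [Finset.sum_const, Finset.card_range, smul_eq_mul]
        linarith

end DeleteColumn

lemma natLog_two_add_two_le {n : ℕ} (hn : 2 ≤ n) :
    (Nat.log 2 n : ℝ) + 2 ≤ 3 / Real.log 2 * Real.log n := by
  have hlog2 : 0 < Real.log 2 := Real.log_pos one_lt_two
  have hlogn : Real.log 2 ≤ Real.log n := Real.log_le_log two_pos (by exact_mod_cast hn)
  have hN : (Nat.log 2 n : ℝ) * Real.log 2 ≤ Real.log n :=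
    (le_div_iff₀ hlog2).mp (Real.natLog_le_logb n 2)
  rw [div_mul_eq_mul_div, le_div_iff₀ hlog2]
  linarith

end PatternAvoidance

/-- Pach–Tardos: if column `j` of `P` has its only 1 at `(i₀,j)` and
`P(i₀,j+1) = P(i₁,j−1) = P(i₁,j+1) = 1`, and `P'` is `P` with column `j` removed, then
`Ex(P,n) = O(Ex(P',n) · log n)`. -/
theorem stmt13 (k l : ℕ) (P : Fin k → Fin l → Prop)
    (i₀ i₁ : Fin k) (j : Fin l)
    (hj1 : 0 < j.val) (hj2 : j.val + 1 < l)
    (honly : P i₀ j ∧ ∀ i, P i j → i = i₀)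
    (h1 : P i₀ ⟨j.val + 1, hj2⟩)
    (h2 : P i₁ ⟨j.val - 1, by omega⟩)
    (h3 : P i₁ ⟨j.val + 1, hj2⟩) :
    ∃ C : ℝ, ∀ n : ℕ, 2 ≤ n →
      (matEx P n : ℝ) ≤
        C * (matEx (fun (i : Fin k) (c : Fin (l - 1)) =>
              P i ⟨if c.val < j.val then c.val else c.val + 1,
                    by have := c.isLt; split <;> omega⟩) n : ℝ) * Real.log n := by
  obtain ⟨m, rfl⟩ : ∃ m, l = m + 2 := ⟨l - 2, by omega⟩
  obtain ⟨i, rfl⟩ : ∃ i : Fin m, j = i.castSucc.succ :=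
    ⟨⟨j.val - 1, by omega⟩, Fin.ext (by simp; omega)⟩
  have hP' : (fun (r : Fin k) (c : Fin (m + 2 - 1)) =>
      P r ⟨if c.val < i.castSucc.succ.val then c.val else c.val + 1,
        by have := c.isLt; split <;> omega⟩) = fun r q => P r (i.castSucc.succ.succAbove q) := by
    funext r q
    congr 1
    ext
    simp only [Nat.add_one_sub_one, Fin.val_succ, Fin.val_castSucc, Order.lt_add_one_iff,
      Fin.succAbove, Fin.lt_def]
    split_ifs <;> rfl
  refine ⟨3 / Real.log 2, fun n hn => ?_⟩
  rw [hP']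
  set E' := matEx (fun r q => P r (i.castSucc.succ.succAbove q)) n
  calc (matEx P n : ℝ) ≤ (Nat.log 2 n + 2) * E' := by
        exact_mod_cast PatternAvoidance.matEx_le_mul_matEx_succAbove honly.2 h1 h2 h3 n
    _ ≤ 3 / Real.log 2 * Real.log n * E' := by
        gcongr
        exact PatternAvoidance.natLog_two_add_two_le hn
    _ = 3 / Real.log 2 * E' * Real.log n := by ring
end

section
/- For every 0–1 pattern P ∈ {0,1}^{k×l} with k, l ≥ 1, there is a constant C (depending only on k and l) such that Ex(P, n) ≤ C · n^{2 − 1/min(k,l)} for all n ≥ 1. -/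
/-!
Kővári–Sós–Turán double counting. If `A` avoids `P`, no `l` columns are all 1 in `k` rows
(these would form an all-ones `k × l` submatrix), so the row weights `dᵢ` satisfy
`∑ᵢ C(dᵢ, l) ≤ (k - 1) C(n, l)`. The power-mean inequality applied to `dᵢ + 1 - l` turns this into
`∑ᵢ dᵢ ≤ k n^{2 - 1/l} + l n`; transposing gives the bound with `k` in place of `l`.
-/

open Finset

section Counting

variable {k l m n : ℕ}

def rowSupport (A : Fin m → Fin n → Bool) (i : Fin m) : Finset (Fin n) :=
  {j | A i j = true}

theorem wt_eq_sum_card_rowSupport (A : Fin m → Fin n → Bool) :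
    wt A = ∑ i, #(rowSupport A i) := by
  simp only [wt, rowSupport, card_filter, Fintype.sum_prod_type]

theorem wt_transpose (A : Fin m → Fin n → Bool) : wt (fun j i => A i j) = wt A :=
  card_bij' (fun p _ => p.swap) (fun p _ => p.swap) (by simp) (by simp) (by simp) (by simp)

theorem PatContains.transpose {P : Fin k → Fin l → Prop} {A : Fin m → Fin n → Bool}
    (h : PatContains P A) : PatContains (fun j i => P i j) (fun j i => A i j) :=
  let ⟨r, c, hr, hc, hPA⟩ := h
  ⟨c, r, hc, hr, fun j i hP => hPA i j hP⟩

-- `k` such rows and the columns of `S` form an all-ones `k × l` submatrix.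
theorem patContains_of_le_card_rows_superset (P : Fin k → Fin l → Prop)
    {A : Fin m → Fin n → Bool} {S : Finset (Fin n)} (hS : #S = l)
    (hk : k ≤ #{i | S ⊆ rowSupport A i}) : PatContains P A := by
  obtain ⟨T, hT, hTk⟩ := exists_subset_card_eq hk
  refine ⟨fun i => T.orderEmbOfFin hTk i, fun j => S.orderEmbOfFin hS j,
    (T.orderEmbOfFin hTk).strictMono, (S.orderEmbOfFin hS).strictMono, fun i j _ => ?_⟩
  have hrow := (mem_filter.mp (hT (T.orderEmbOfFin_mem hTk i))).2
  simpa [rowSupport] using hrow (S.orderEmbOfFin_mem hS j)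

theorem sum_choose_card_rowSupport_le {P : Fin k → Fin l → Prop} {A : Fin m → Fin n → Bool}
    (hA : ¬ PatContains P A) : ∑ i, (#(rowSupport A i)).choose l ≤ (k - 1) * n.choose l := by
  have hcount : ∑ i, (#(rowSupport A i)).choose l =
      ∑ S ∈ powersetCard l univ, #{i | S ⊆ rowSupport A i} := by
    convert sum_card_bipartiteAbove_eq_sum_card_bipartiteBelow (s := univ)
      (t := powersetCard l univ) (r := fun i S => S ⊆ rowSupport A i) using 2 with i _ S
    · rw [← card_powersetCard]
      congr 1
      ext S
      simp [bipartiteAbove, mem_powersetCard, and_comm]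
    · rfl
  have hfew : ∀ S ∈ powersetCard l (univ : Finset (Fin n)), #{i | S ⊆ rowSupport A i} ≤ k - 1 :=
    fun S hS => Nat.le_sub_one_of_lt <| lt_of_not_ge fun hk =>
      hA (patContains_of_le_card_rows_superset P (mem_powersetCard.mp hS).2 hk)
  calc ∑ i, (#(rowSupport A i)).choose l
      = ∑ S ∈ powersetCard l univ, #{i | S ⊆ rowSupport A i} := hcount
    _ ≤ #(powersetCard l (univ : Finset (Fin n))) • (k - 1) := sum_le_card_nsmul _ _ _ hfew
    _ = (k - 1) * n.choose l := by simp [mul_comm]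

end Counting

/-- Multiplying by `l!` turns binomial coefficients into falling factorials, which are squeezed
between `(d + 1 - l) ^ l` and `d ^ l`. -/
theorem sum_pow_sub_le_of_sum_choose_le {ι : Type*} {s : Finset ι} {d : ι → ℕ} {c l n : ℕ}
    (h : ∑ i ∈ s, (d i).choose l ≤ c * n.choose l) :
    ∑ i ∈ s, (d i + 1 - l) ^ l ≤ c * n ^ l := by
  have hfact : l.factorial * ∑ i ∈ s, (d i).descFactorial l ≤ l.factorial * (c * n ^ l) :=
    calc l.factorial * ∑ i ∈ s, (d i).descFactorial l
        = l.factorial * (l.factorial * ∑ i ∈ s, (d i).choose l) := by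
          simp only [Nat.descFactorial_eq_factorial_mul_choose, mul_sum]
      _ ≤ l.factorial * (l.factorial * (c * n.choose l)) := by gcongr
      _ = l.factorial * (c * n.descFactorial l) := by
          rw [Nat.descFactorial_eq_factorial_mul_choose]; ring
      _ ≤ l.factorial * (c * n ^ l) := by gcongr; exact Nat.descFactorial_le_pow n l
  calc ∑ i ∈ s, (d i + 1 - l) ^ l ≤ ∑ i ∈ s, (d i).descFactorial l :=
        sum_le_sum fun i _ => Nat.pow_sub_le_descFactorial (d i) l
    _ ≤ c * n ^ l := Nat.le_of_mul_le_mul_left hfact l.factorial_pos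

theorem le_mul_rpow_two_sub_inv {x c y : ℝ} {l : ℕ} (hx : 0 ≤ x) (hc : 0 ≤ c) (hy : 0 ≤ y)
    (hl : l ≠ 0) (h : x ^ l ≤ c ^ l * y ^ (2 * l - 1)) : x ≤ c * y ^ (2 - 1 / (l : ℝ)) := by
  have hpow : (c * y ^ (2 - 1 / (l : ℝ))) ^ l = c ^ l * y ^ (2 * l - 1) := by
    rw [mul_pow, ← Real.rpow_natCast (y ^ _), ← Real.rpow_mul hy, ← Real.rpow_natCast y]
    congr 2
    push_cast [Nat.cast_sub (by omega : 1 ≤ 2 * l)]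
    field_simp
  exact (pow_le_pow_iff_left₀ hx (by positivity) hl).mp (hpow ▸ h)

theorem wt_le_of_not_patContains {k l n : ℕ} {P : Fin k → Fin l → Prop}
    {A : Fin n → Fin n → Bool} (hA : ¬ PatContains P A) (hl : 1 ≤ l) (hn : 1 ≤ n) :
    (wt A : ℝ) ≤ (k + l) * (n : ℝ) ^ (2 - 1 / (l : ℝ)) := by
  set d : Fin n → ℕ := fun i => #(rowSupport A i)
  set E := ∑ i, (d i + 1 - l)
  have hE : E ^ l ≤ k ^ l * n ^ (2 * l - 1) := by
    obtain ⟨l', rfl⟩ : ∃ l', l = l' + 1 := ⟨l - 1, by omega⟩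
    have hjensen := pow_sum_le_card_mul_sum_pow (s := univ)
      (f := fun i => d i + 1 - (l' + 1)) (fun i _ => Nat.zero_le _) l'
    rw [card_univ, Fintype.card_fin] at hjensen
    calc E ^ (l' + 1) ≤ n ^ l' * ∑ i, (d i + 1 - (l' + 1)) ^ (l' + 1) := hjensen
      _ ≤ n ^ l' * ((k - 1) * n ^ (l' + 1)) := by
          gcongr
          exact sum_pow_sub_le_of_sum_choose_le (sum_choose_card_rowSupport_le hA)
      _ ≤ k ^ (l' + 1) * n ^ (2 * (l' + 1) - 1) := by
          rw [mul_left_comm, ← pow_add, show l' + (l' + 1) = 2 * (l' + 1) - 1 by omega]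
          gcongr
          exact (Nat.sub_le k 1).trans (Nat.le_self_pow (by omega) k)
  have hwt : wt A ≤ E + n * l := by
    rw [wt_eq_sum_card_rowSupport]
    calc ∑ i, d i ≤ ∑ i, (d i + 1 - l + l) := sum_le_sum fun i _ => by omega
      _ = E + n * l := by simp [E, sum_add_distrib]
  have hE' : (E : ℝ) ≤ k * (n : ℝ) ^ (2 - 1 / (l : ℝ)) :=
    le_mul_rpow_two_sub_inv (by positivity) (by positivity) (by positivity) (by omega)
      (by exact_mod_cast hE)
  have hn' : (n : ℝ) ≤ (n : ℝ) ^ (2 - 1 / (l : ℝ)) := by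
    refine Real.self_le_rpow_of_one_le (by exact_mod_cast hn) ?_
    have : 1 / (l : ℝ) ≤ 1 := by
      rw [div_le_one (by positivity)]
      exact_mod_cast hl
    linarith
  calc (wt A : ℝ) ≤ E + n * l := by exact_mod_cast hwt
    _ ≤ k * (n : ℝ) ^ (2 - 1 / (l : ℝ)) + (n : ℝ) ^ (2 - 1 / (l : ℝ)) * l := by gcongr
    _ = (k + l) * (n : ℝ) ^ (2 - 1 / (l : ℝ)) := by ring

theorem wt_le_of_not_patContains_min {k l n : ℕ} {P : Fin k → Fin l → Prop}
    {A : Fin n → Fin n → Bool} (hA : ¬ PatContains P A) (hk : 1 ≤ k) (hl : 1 ≤ l) (hn : 1 ≤ n) :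
    (wt A : ℝ) ≤ (k + l) * (n : ℝ) ^ (2 - 1 / (min k l : ℝ)) := by
  rcases le_total l k with hlk | hkl
  · rw [min_eq_right (by exact_mod_cast hlk)]
    exact wt_le_of_not_patContains hA hl hn
  · rw [min_eq_left (by exact_mod_cast hkl), add_comm, ← wt_transpose]
    exact wt_le_of_not_patContains (fun h => hA (by simpa using h.transpose)) hk hn

theorem matEx_le {k l n : ℕ} {P : Fin k → Fin l → Prop} {b : ℝ} (hb : 0 ≤ b)
    (h : ∀ A : Fin n → Fin n → Bool, ¬ PatContains P A → (wt A : ℝ) ≤ b) :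
    (matEx P n : ℝ) ≤ b := by
  refine le_trans (Nat.cast_le.mpr (csSup_le' ?_)) (Nat.floor_le hb)
  rintro _ ⟨A, hA, rfl⟩
  exact Nat.le_floor (h A hA)

/-- Kővári–Sós–Turán: for every `k × l` pattern `P`,
`Ex(P,n) = O(n^{2 − 1/min(k,l)})`, with constant depending only on `k` and `l`. -/
theorem stmt14 (k l : ℕ) (hk : 1 ≤ k) (hl : 1 ≤ l) :
    ∃ C : ℝ, ∀ P : Fin k → Fin l → Prop, ∀ n : ℕ, 1 ≤ n →
      (matEx P n : ℝ) ≤ C * (n : ℝ) ^ ((2 : ℝ) - 1 / (min k l : ℝ)) :=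
  ⟨k + l, fun _ _ hn => matEx_le (by positivity) fun _ hA =>
    wt_le_of_not_patContains_min hA hk hl hn⟩
end

section
/- Let H be a vertex-ordered graph on {1,…,m} that is not ordered bipartite, i.e., there is no index s ∈ {0,1,…,m} such that every edge of H joins {1,…,s} to {s+1,…,m}. Then Ex(H, n) = Θ(n²): there is a constant c > 0 such that c·n² ≤ Ex(H, n) ≤ n² for all sufficiently large n. -/
/-- Ordered containment of vertex-ordered graphs: a strictly increasing map
carrying edges to edges. -/
def OContains {m n : ℕ} (H : SimpleGraph (Fin m)) (G : SimpleGraph (Fin n)) : Prop :=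
  ∃ f : Fin m → Fin n, StrictMono f ∧ ∀ i j, H.Adj i j → G.Adj (f i) (f j)

/-- `oex H n` is the maximum number of edges of a vertex-ordered graph on `n` vertices
that does not contain `H`. -/
noncomputable def oex {m : ℕ} (H : SimpleGraph (Fin m)) (n : ℕ) : ℕ :=
  sSup {w | ∃ G : SimpleGraph (Fin n), ¬ OContains H G ∧ G.edgeSet.ncard = w}

/-!
The complete ordered bipartite graph with parts `{1,…,⌊n/2⌋}` and `{⌊n/2⌋+1,…,n}` has about
`n²/4` edges, and it does not contain `H`: pulling its cut back along a strictly increasing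
embedding would give a cut of `H` crossed by every edge, i.e. would make `H` ordered bipartite.
The upper bound is the trivial `n.choose 2 ≤ n²`.
-/

open Finset

theorem Fin.exists_lt_iff_val_lt_of_monotone {m : ℕ} {α : Type*} [Preorder α]
    {f : Fin m → α} (hf : Monotone f) (a : α) :
    ∃ s ≤ m, ∀ i, f i < a ↔ (i : ℕ) < s := by
  classical
  set S : Finset (Fin m) := univ.filter (fun i => f i < a)
  refine ⟨#S, (card_filter_le _ _).trans_eq (card_fin m), fun i => ⟨fun hi => ?_, fun hi => ?_⟩⟩
  · have hsub : Iic i ⊆ S := fun j hj =>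
      mem_filter.2 ⟨mem_univ j, (hf (mem_Iic.1 hj)).trans_lt hi⟩
    simpa using card_le_card hsub
  · by_contra hfi
    have hsub : S ⊆ Iio i := fun j hj =>
      mem_Iio.2 (lt_of_not_ge fun hij => hfi ((hf hij).trans_lt (mem_filter.1 hj).2))
    exact (card_le_card hsub).not_gt (by simpa using hi)

def orderedCompleteBipartite (n k : ℕ) : SimpleGraph (Fin n) where
  Adj x y := (x.val < k ∧ k ≤ y.val) ∨ (y.val < k ∧ k ≤ x.val)
  symm := ⟨fun _ _ => Or.symm⟩
  loopless := ⟨fun _ hx => by omega⟩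

theorem OContains.exists_le_orderedCompleteBipartite {m n k : ℕ} {H : SimpleGraph (Fin m)}
    (hH : OContains H (orderedCompleteBipartite n k)) :
    ∃ s ≤ m, H ≤ orderedCompleteBipartite m s := by
  obtain ⟨f, hf, hmap⟩ := hH
  obtain ⟨s, hs, hcut⟩ := Fin.exists_lt_iff_val_lt_of_monotone
    (f := fun i => (f i).val) (fun _ _ hij => hf.monotone hij) k
  refine ⟨s, hs, fun i j hij => ?_⟩
  have hi := hcut i
  have hj := hcut j
  change (_ ∧ _) ∨ (_ ∧ _)
  rcases hmap i j hij with ⟨h₁, h₂⟩ | ⟨h₁, h₂⟩ <;> omega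

theorem mul_sub_le_ncard_edgeSet_orderedCompleteBipartite (n k : ℕ) :
    k * (n - k) ≤ (orderedCompleteBipartite n k).edgeSet.ncard := by
  let φ : Fin k × Fin (n - k) → Sym2 (Fin n) :=
    fun p => s(⟨p.1, by have := p.2.isLt; omega⟩, ⟨k + p.2, by omega⟩)
  have hinj : Function.Injective φ := by
    rintro ⟨a, b⟩ ⟨a', b'⟩ hab
    simp only [φ, Sym2.eq_iff, Fin.mk.injEq] at hab
    rcases hab with ⟨h₁, h₂⟩ | ⟨h₁, h₂⟩ <;> ext <;> simp <;> omega
  have hsub : Set.range φ ⊆ (orderedCompleteBipartite n k).edgeSet := by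
    rintro _ ⟨⟨a, b⟩, rfl⟩
    exact Or.inl ⟨a.isLt, Nat.le_add_right _ _⟩
  calc k * (n - k) = Nat.card (Set.range φ) := by
        rw [Nat.card_range_of_injective hinj]; simp
    _ ≤ (orderedCompleteBipartite n k).edgeSet.ncard := Set.ncard_le_ncard hsub

theorem SimpleGraph.ncard_edgeSet_le_sq {n : ℕ} (G : SimpleGraph (Fin n)) :
    G.edgeSet.ncard ≤ n ^ 2 := by
  classical
  rw [← coe_edgeFinset, Set.ncard_coe_finset]
  simpa using G.card_edgeFinset_le_card_choose_two.trans (Nat.choose_le_pow _ 2)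

theorem oex_le_sq {m : ℕ} (H : SimpleGraph (Fin m)) (n : ℕ) : oex H n ≤ n ^ 2 :=
  csSup_le' <| by rintro _ ⟨G, -, rfl⟩; exact G.ncard_edgeSet_le_sq

theorem ncard_edgeSet_le_oex {m n : ℕ} {H : SimpleGraph (Fin m)} {G : SimpleGraph (Fin n)}
    (hG : ¬ OContains H G) : G.edgeSet.ncard ≤ oex H n :=
  le_csSup ⟨n ^ 2, by rintro _ ⟨G, -, rfl⟩; exact G.ncard_edgeSet_le_sq⟩ ⟨G, hG, rfl⟩

theorem sq_div_eight_le_half_mul_sub_half {n : ℕ} (hn : 2 ≤ n) :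
    (1 / 8 : ℝ) * (n : ℝ) ^ 2 ≤ ((n / 2 * (n - n / 2) : ℕ) : ℝ) := by
  have hk₁ : 2 * (n / 2) ≤ n := Nat.mul_div_le n 2
  have hk₂ : n ≤ 2 * (n / 2) + 1 := by omega
  rw [Nat.cast_mul, Nat.cast_sub (Nat.div_le_self n 2)]
  have c₁ : (2 : ℝ) * (n / 2 : ℕ) ≤ n := by exact_mod_cast hk₁
  have c₂ : (n : ℝ) ≤ 2 * (n / 2 : ℕ) + 1 := by exact_mod_cast hk₂
  have c₃ : (2 : ℝ) ≤ n := by exact_mod_cast hn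
  nlinarith [mul_nonneg (sub_nonneg.2 c₁) (sub_nonneg.2 c₂)]

/-- If a vertex-ordered graph `H` is not ordered bipartite (no cut `s` such that
all edges join `{1,…,s}` to `{s+1,…,m}`), then `Ex(H, n) = Θ(n²)`. -/
theorem stmt18 (m : ℕ) (H : SimpleGraph (Fin m))
    (h : ¬ ∃ s : ℕ, s ≤ m ∧ ∀ i j : Fin m, H.Adj i j →
        (i.val < s ∧ s ≤ j.val) ∨ (j.val < s ∧ s ≤ i.val)) :
    ∃ (c : ℝ) (n₀ : ℕ), 0 < c ∧ ∀ n : ℕ, n₀ ≤ n →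
      c * (n : ℝ) ^ 2 ≤ (oex H n : ℝ) ∧ (oex H n : ℝ) ≤ (n : ℝ) ^ 2 := by
  refine ⟨1 / 8, 2, by norm_num, fun n hn => ⟨?_, by exact_mod_cast oex_le_sq H n⟩⟩
  have hfree : ¬ OContains H (orderedCompleteBipartite n (n / 2)) := fun hc =>
    let ⟨s, hs, hle⟩ := hc.exists_le_orderedCompleteBipartite
    h ⟨s, hs, fun _ _ hij => hle hij⟩
  calc (1 / 8 : ℝ) * (n : ℝ) ^ 2 ≤ ((n / 2 * (n - n / 2) : ℕ) : ℝ) :=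
        sq_div_eight_le_half_mul_sub_half hn
    _ ≤ oex H n := by
        exact_mod_cast (mul_sub_le_ncard_edgeSet_orderedCompleteBipartite n (n / 2)).trans
          (ncard_edgeSet_le_oex hfree)
end
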